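/- arXiv:2005.04200 — 14 statements merged into one kernel-verified Lean document; each statement's English description precedes it below -/
import Mathlib

section
/- For any graph G with minimum degree at least two, the covering Italian domination number of G equals the vertex cover number of G. -/
open Finset SimpleGraph
open scoped Classical

noncomputable section

/-- A covering Italian dominating function: values in {0,1,2}, every vertex assigned 0
has neighborhood weight at least 2, and the vertices assigned 0 form an independent set. -/
def IsCIDFun {V : Type*} [Fintype V] (G : SimpleGraph V) (f : V → ℕ) : Prop :=
  (∀ v, f v ≤ 2) ∧
  (∀ v, f v = 0 → 2 ≤ ∑ u ∈ univ.filter (fun u => G.Adj v u), f u) ∧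
  ∀ u v, G.Adj u v → ¬(f u = 0 ∧ f v = 0)

/-- The covering Italian domination number. -/
def gammaCI {V : Type*} [Fintype V] (G : SimpleGraph V) : ℕ :=
  sInf {w | ∃ f : V → ℕ, IsCIDFun G f ∧ ∑ v, f v = w}

/-- The vertex cover number. -/
def vcNum {V : Type*} [Fintype V] (G : SimpleGraph V) : ℕ :=
  sInf {k | ∃ C : Finset V, (∀ u v, G.Adj u v → u ∈ C ∨ v ∈ C) ∧ C.card = k}

/-- For any graph `G` with minimum degree at least two, the covering Italian domination
number of `G` equals the vertex cover number of `G`. -/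
theorem stmt0 {V : Type*} [Fintype V] (G : SimpleGraph V) (hδ : 2 ≤ G.minDegree) :
    gammaCI G = vcNum G := by
  apply le_antisymm
  · -- gammaCI ≤ vcNum: take a minimum vertex cover C, use its indicator.
    have hne : {k | ∃ C : Finset V, (∀ u v, G.Adj u v → u ∈ C ∨ v ∈ C) ∧ C.card = k}.Nonempty :=
      ⟨Fintype.card V, Finset.univ, fun u v _ => Or.inl (mem_univ u), rfl⟩
    obtain ⟨C, hC, hcard⟩ := Nat.sInf_mem hne
    set f : V → ℕ := fun v => if v ∈ C then 1 else 0 with hf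
    apply Nat.sInf_le
    refine ⟨f, ⟨?_, ?_, ?_⟩, ?_⟩
    · intro v; simp only [hf]; split <;> omega
    · intro v hv
      have hvC : v ∉ C := by
        by_contra h; simp [hf, h] at hv
      have hmem : ∀ u ∈ univ.filter (fun u => G.Adj v u), f u = 1 := by
        intro u hu
        have hadj : G.Adj v u := (mem_filter.mp hu).2
        rcases hC v u hadj with h | h
        · exact absurd h hvC
        · simp [hf, h]
      rw [Finset.sum_congr rfl hmem, Finset.sum_const, smul_eq_mul, mul_one]
      have hdeg : (univ.filter (fun u => G.Adj v u)).card = G.degree v := by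
        rw [SimpleGraph.degree]
        congr 1
        ext u
        simp [SimpleGraph.neighborFinset, SimpleGraph.mem_neighborSet]
      rw [hdeg]
      exact le_trans hδ (G.minDegree_le_degree v)
    · intro u v hadj ⟨hu, hv⟩
      rcases hC u v hadj with h | h
      · simp [hf, h] at hu
      · simp [hf, h] at hv
    · unfold vcNum
      rw [← hcard]
      simp [hf, Finset.sum_ite_mem, Finset.univ_inter]
  · -- vcNum ≤ gammaCI
    have hne : {w | ∃ f : V → ℕ, IsCIDFun G f ∧ ∑ v, f v = w}.Nonempty := by
      refine ⟨∑ v : V, 2, fun _ => 2, ⟨fun v => le_refl 2, ?_, ?_⟩, rfl⟩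
      · intro v hv; simp at hv
      · intro u v _ h; simp at h
    apply le_csInf hne
    rintro w ⟨f, ⟨hle, hdom, hind⟩, hsum⟩
    set C : Finset V := univ.filter (fun v => f v ≠ 0) with hCdef
    have hcov : ∀ u v, G.Adj u v → u ∈ C ∨ v ∈ C := by
      intro u v hadj
      by_contra h
      push_neg at h
      simp only [hCdef, mem_filter, mem_univ, true_and, not_not] at h
      exact hind u v hadj ⟨h.1, h.2⟩
    calc vcNum G ≤ C.card := Nat.sInf_le ⟨C, hcov, rfl⟩
      _ ≤ ∑ v ∈ C, f v := by
          rw [Finset.card_eq_sum_ones]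
          apply Finset.sum_le_sum
          intro v hv
          have : f v ≠ 0 := (mem_filter.mp hv).2
          omega
      _ ≤ ∑ v, f v := Finset.sum_le_sum_of_subset (Finset.subset_univ C)
      _ = w := hsum
end
end

section
/- For any connected graph G of order at least two, β(G) ≤ γ_cI(G) ≤ 2β(G). -/
open Finset SimpleGraph
open scoped Classical

noncomputable section

/-- For any connected graph of order at least two, `β(G) ≤ γ_cI(G) ≤ 2β(G)`. -/
theorem stmt1 {V : Type*} [Fintype V] (G : SimpleGraph V) (hc : G.Connected)
    (hn : 2 ≤ Fintype.card V) : vcNum G ≤ gammaCI G ∧ gammaCI G ≤ 2 * vcNum G := by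
  have hSne : {w | ∃ f : V → ℕ, IsCIDFun G f ∧ ∑ v, f v = w}.Nonempty := by
    refine ⟨∑ v : V, 2, fun _ => 2, ⟨fun v => le_refl 2, fun v h => by simp at h,
      fun u v _ h => by simp at h⟩, rfl⟩
  have hCne : {k | ∃ C : Finset V, (∀ u v, G.Adj u v → u ∈ C ∨ v ∈ C) ∧ C.card = k}.Nonempty :=
    ⟨(univ : Finset V).card, univ, fun u v _ => Or.inl (mem_univ u), rfl⟩
  constructor
  · -- vcNum ≤ gammaCI
    obtain ⟨f, hf, hsum⟩ := Nat.sInf_mem hSne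
    set C : Finset V := univ.filter (fun v => f v ≠ 0) with hC
    have hcov : ∀ u v, G.Adj u v → u ∈ C ∨ v ∈ C := by
      intro u v huv
      by_contra h
      push_neg at h
      simp [hC] at h
      exact hf.2.2 u v huv ⟨h.1, h.2⟩
    have hcard : C.card ≤ gammaCI G := by
      rw [gammaCI, ← hsum]
      calc C.card = ∑ v ∈ C, 1 := by simp
        _ ≤ ∑ v ∈ C, f v := Finset.sum_le_sum (fun v hv =>
            Nat.one_le_iff_ne_zero.mpr (Finset.mem_filter.mp hv).2)
        _ ≤ ∑ v, f v := Finset.sum_le_sum_of_subset (Finset.subset_univ C)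
    exact le_trans (Nat.sInf_le ⟨C, hcov, rfl⟩) hcard
  · -- gammaCI ≤ 2 * vcNum
    obtain ⟨C, hcov, hcard⟩ := Nat.sInf_mem hCne
    set f : V → ℕ := fun v => if v ∈ C then 2 else 0 with hfdef
    have hIsC : IsCIDFun G f := by
      refine ⟨fun v => by simp [hfdef]; split <;> omega, ?_, ?_⟩
      · intro v hv
        have hvC : v ∉ C := by
          by_contra h; simp [hfdef, h] at hv
        -- v has a neighbor
        obtain ⟨u, hune⟩ : ∃ u : V, u ≠ v := by
          obtain ⟨a, b, hab⟩ := Fintype.exists_pair_of_one_lt_card hn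
          rcases eq_or_ne a v with rfl | h
          · exact ⟨b, fun h' => hab h'.symm⟩
          · exact ⟨a, h⟩
        obtain ⟨w⟩ := hc.preconnected v u
        have hnn : ¬ w.Nil := SimpleGraph.Walk.not_nil_of_ne (Ne.symm hune)
        have hadj : G.Adj v (w.getVert 1) := w.adj_snd hnn
        set u0 := w.getVert 1
        have hu0C : u0 ∈ C := by
          rcases hcov v u0 hadj with h | h
          · exact absurd h hvC
          · exact h
        have : f u0 = 2 := by simp [hfdef, hu0C]
        calc (2:ℕ) = f u0 := this.symm
          _ ≤ ∑ x ∈ univ.filter (fun x => G.Adj v x), f x :=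
            Finset.single_le_sum (fun x _ => Nat.zero_le _)
              (by simp [hadj])
      · intro u v huv h
        rcases hcov u v huv with hu | hu
        · simp [hfdef, hu] at h
        · simp [hfdef, hu] at h
    have hsum : ∑ v, f v = 2 * C.card := by
      rw [hfdef, Finset.sum_ite_mem, Finset.univ_inter, Finset.sum_const, smul_eq_mul, mul_comm]
    have hv : C.card = vcNum G := hcard
    calc gammaCI G ≤ 2 * C.card := Nat.sInf_le ⟨f, hIsC, hsum⟩
      _ = 2 * vcNum G := by rw [hv]
end
end

section
/- Let G be a K_{1,r}-free graph of order n with s' strong support vertices. Then γ_cI(G) ≥ 2(n + s')/(r + 1). -/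
open Finset SimpleGraph
open scoped Classical

noncomputable section

/-- The number of leaf neighbors (vertices of degree one adjacent) of `v`. -/
def leafNbrCount {V : Type*} [Fintype V] (G : SimpleGraph V) (v : V) : ℕ :=
  (univ.filter (fun u => G.Adj v u ∧ G.degree u = 1)).card

/-- The number of strong support vertices: vertices adjacent to at least two leaves. -/
def strongSupportCount {V : Type*} [Fintype V] (G : SimpleGraph V) : ℕ :=
  (univ.filter (fun v => 2 ≤ leafNbrCount G v)).card

/-- `G` contains no induced copy of the star `K_{1,r}`. -/
def K1rFree {V : Type*} [Fintype V] (G : SimpleGraph V) (r : ℕ) : Prop :=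
  ¬ ∃ (v : V) (S : Finset V), S.card = r ∧ (∀ u ∈ S, G.Adj v u) ∧
      ∀ u ∈ S, ∀ w ∈ S, ¬ G.Adj u w

/-- For a `K_{1,r}`-free graph of order `n` with `s'` strong support vertices,
`γ_cI(G) ≥ 2(n + s')/(r + 1)`. -/
theorem stmt4 {V : Type*} [Fintype V] (G : SimpleGraph V) (r : ℕ) (hfree : K1rFree G r) :
    (2 * ((Fintype.card V : ℚ) + strongSupportCount G)) / (r + 1) ≤ gammaCI G := by
  classical
  obtain hV | hV := isEmpty_or_nonempty V
  · have h1 : Fintype.card V = 0 := Fintype.card_eq_zero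
    have h2 : strongSupportCount G = 0 := by
      simp [strongSupportCount, Finset.univ_eq_empty]
    rw [h1, h2]
    norm_num
  -- nonempty case
  have hne : {w | ∃ f : V → ℕ, IsCIDFun G f ∧ ∑ v, f v = w}.Nonempty :=
    ⟨Fintype.card V, fun _ => 1, ⟨fun _ => one_le_two, fun _ h => absurd h one_ne_zero,
      fun _ _ _ h => one_ne_zero h.1⟩, by simp⟩
  have hmem : ∃ g : V → ℕ, IsCIDFun G g ∧ ∑ v, g v = gammaCI G := Nat.sInf_mem hne
  obtain ⟨f, ⟨hf2, hfdom, hind⟩, hsum⟩ := hmem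
  -- no vertex has ≥ r neighbors with f = 0
  have hd0 : ∀ u : V, (univ.filter (fun x => G.Adj u x ∧ f x = 0)).card < r := by
    intro u
    by_contra h
    push_neg at h
    obtain ⟨S, hSsub, hScard⟩ := Finset.exists_subset_card_eq h
    exact hfree ⟨u, S, hScard, fun x hx => ((Finset.mem_filter.mp (hSsub hx)).2).1,
      fun x hx y hy hadj => hind x y hadj ⟨((Finset.mem_filter.mp (hSsub hx)).2).2,
        ((Finset.mem_filter.mp (hSsub hy)).2).2⟩⟩
  have hr1 : 1 ≤ r := by
    obtain ⟨u⟩ := hV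
    have := hd0 u
    omega
  -- a leaf's unique neighbor
  have huniq : ∀ v u : V, G.Adj v u → G.degree u = 1 → ∀ x, G.Adj u x → x = v := by
    intro v u hadj hdeg x hx
    obtain ⟨a, ha⟩ := Finset.card_eq_one.mp (hdeg : (G.neighborFinset u).card = 1)
    have hv : v ∈ G.neighborFinset u := by
      rw [SimpleGraph.mem_neighborFinset]; exact hadj.symm
    have hxm : x ∈ G.neighborFinset u := by
      rw [SimpleGraph.mem_neighborFinset]; exact hx
    rw [ha, Finset.mem_singleton] at hv hxm
    rw [hxm, hv]
  -- a strong support vertex forces r ≥ 3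
  have hr3 : ∀ v : V, 2 ≤ leafNbrCount G v → 3 ≤ r := by
    intro v hv
    obtain ⟨u1, hu1, u2, hu2, hne12⟩ := Finset.one_lt_card.mp
      (hv : 1 < (univ.filter (fun u => G.Adj v u ∧ G.degree u = 1)).card)
    rw [Finset.mem_filter] at hu1 hu2
    obtain ⟨-, ha1, hd1⟩ := hu1
    obtain ⟨-, ha2, hd2⟩ := hu2
    have hnadj : ¬ G.Adj u1 u2 := by
      intro h
      have h' := huniq v u1 ha1 hd1 u2 h
      rw [h'] at ha2
      exact G.irrefl ha2
    by_contra hcon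
    push_neg at hcon
    interval_cases r
    · refine hfree ⟨v, {u1}, by simp, ?_, ?_⟩
      · intro x hx
        rw [Finset.mem_singleton] at hx
        subst hx; exact ha1
      · intro x hx y hy
        rw [Finset.mem_singleton] at hx hy
        subst hx; subst hy; exact G.irrefl
    · refine hfree ⟨v, {u1, u2}, ?_, ?_, ?_⟩
      · rw [Finset.card_insert_of_notMem (by simpa using hne12), Finset.card_singleton]
      · intro x hx
        simp only [Finset.mem_insert, Finset.mem_singleton] at hx
        rcases hx with rfl | rfl
        · exact ha1
        · exact ha2
      · intro x hx y hy
        simp only [Finset.mem_insert, Finset.mem_singleton] at hx hy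
        rcases hx with rfl | rfl <;> rcases hy with rfl | rfl
        · exact G.irrefl
        · exact hnadj
        · exact fun h => hnadj h.symm
        · exact G.irrefl
  set Z : Finset V := univ.filter (fun v => f v = 0) with hZ
  set Lv : V → Finset V := fun v => univ.filter (fun u => G.Adj v u ∧ G.degree u = 1) with hLv
  set S01 : Finset V := univ.filter (fun v => 2 ≤ leafNbrCount G v ∧ f v ≤ 1) with hS01
  set S2 : Finset V := univ.filter (fun v => 2 ≤ leafNbrCount G v ∧ f v = 2) with hS2
  set L : Finset V := S01.biUnion Lv with hL
  -- key facts about members of L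
  have hLkey : ∀ u ∈ L, 1 ≤ f u ∧ (univ.filter (fun x => G.Adj u x ∧ f x = 0)).card ≤ 1 ∧ 3 ≤ r := by
    intro u hu
    obtain ⟨v, hvS, hvu⟩ := Finset.mem_biUnion.mp hu
    rw [hS01, Finset.mem_filter] at hvS
    obtain ⟨-, hstrong, hfv⟩ := hvS
    rw [hLv] at hvu
    simp only [Finset.mem_filter, Finset.mem_univ, true_and] at hvu
    obtain ⟨hadj, hdeg⟩ := hvu
    refine ⟨?_, ?_, hr3 v hstrong⟩
    · by_contra hfu
      push_neg at hfu
      have hfu0 : f u = 0 := Nat.lt_one_iff.mp hfu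
      have h2 := hfdom u hfu0
      have hflt : univ.filter (fun x => G.Adj u x) = {v} := by
        ext x
        simp only [Finset.mem_filter, Finset.mem_univ, true_and, Finset.mem_singleton]
        constructor
        · exact fun hx => huniq v u hadj hdeg x hx
        · rintro rfl; exact hadj.symm
      rw [hflt, Finset.sum_singleton] at h2
      omega
    · calc (univ.filter (fun x => G.Adj u x ∧ f x = 0)).card
          ≤ ({v} : Finset V).card := Finset.card_le_card (by
            intro x hx
            simp only [Finset.mem_filter, Finset.mem_univ, true_and] at hx
            simp only [Finset.mem_singleton]
            exact huniq v u hadj hdeg x hx.1)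
        _ = 1 := Finset.card_singleton v
  -- double counting
  have hdouble : ∑ v ∈ Z, ∑ u ∈ univ.filter (fun u => G.Adj v u), f u
      = ∑ u, f u * (univ.filter (fun x => G.Adj u x ∧ f x = 0)).card := by
    rw [Finset.sum_congr rfl (fun v _ => Finset.sum_filter _ _)]
    rw [Finset.sum_comm]
    refine Finset.sum_congr rfl (fun u _ => ?_)
    have hset : Z.filter (fun v => G.Adj v u) = univ.filter (fun x => G.Adj u x ∧ f x = 0) := by
      rw [hZ, Finset.filter_filter]
      ext x
      simp only [Finset.mem_filter, Finset.mem_univ, true_and]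
      exact ⟨fun ⟨hA, hB⟩ => ⟨hB.symm, hA⟩, fun ⟨hA, hB⟩ => ⟨hB, hA.symm⟩⟩
    rw [← Finset.sum_filter, hset, Finset.sum_const, smul_eq_mul, Nat.mul_comm]
  have h1 : 2 * Z.card ≤ ∑ u, f u * (univ.filter (fun x => G.Adj u x ∧ f x = 0)).card := by
    rw [← hdouble]
    calc 2 * Z.card = ∑ _v ∈ Z, 2 := by rw [Finset.sum_const, smul_eq_mul, Nat.mul_comm]
      _ ≤ _ := Finset.sum_le_sum (fun v hv => hfdom v (by
            rw [hZ, Finset.mem_filter] at hv; exact hv.2))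
  have h2 : (∑ u, f u * (univ.filter (fun x => G.Adj u x ∧ f x = 0)).card) + L.card
      ≤ (∑ v, f v) * (r - 1) := by
    have hLc : L.card = ∑ u, (if u ∈ L then 1 else 0) := by
      rw [Finset.sum_ite_mem, Finset.univ_inter, Finset.sum_const, smul_eq_mul, Nat.mul_one]
    rw [hLc, ← Finset.sum_add_distrib, Finset.sum_mul]
    refine Finset.sum_le_sum (fun u _ => ?_)
    by_cases hu : u ∈ L
    · obtain ⟨hfu, hd1, hr⟩ := hLkey u hu
      rw [if_pos hu]
      calc f u * (univ.filter (fun x => G.Adj u x ∧ f x = 0)).card + 1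
          ≤ f u * 1 + f u * 1 := Nat.add_le_add (Nat.mul_le_mul_left _ hd1) (by simpa using hfu)
        _ = f u * 2 := by ring
        _ ≤ f u * (r - 1) := Nat.mul_le_mul_left _ (by omega)
    · rw [if_neg hu, Nat.add_zero]
      exact Nat.mul_le_mul_left _ (Nat.le_pred_of_lt (hd0 u))
  have h3 : 2 * S01.card ≤ L.card := by
    rw [hL, Finset.card_biUnion]
    · calc 2 * S01.card = ∑ _v ∈ S01, 2 := by rw [Finset.sum_const, smul_eq_mul, Nat.mul_comm]
        _ ≤ ∑ v ∈ S01, (Lv v).card := Finset.sum_le_sum (fun v hv => by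
            rw [hS01, Finset.mem_filter] at hv
            exact hv.2.1)
    · intro x hx y hy hxy
      rw [Function.onFun, Finset.disjoint_left]
      intro u hux huy
      rw [hLv] at hux huy
      simp only [Finset.mem_filter, Finset.mem_univ, true_and] at hux huy
      exact hxy ((huniq x u hux.1 hux.2 y huy.1.symm).symm)
  have h4 : Fintype.card V + S2.card ≤ Z.card + ∑ v, f v := by
    have hsplit : Z.card + (univ.filter (fun v => ¬ f v = 0)).card = Fintype.card V := by
      rw [hZ]
      exact Finset.card_filter_add_card_filter_not _
    have hsub : S2 ⊆ univ.filter (fun v => ¬ f v = 0) := by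
      intro v hv
      rw [hS2, Finset.mem_filter] at hv
      simp only [Finset.mem_filter, Finset.mem_univ, true_and]
      omega
    have e1 : ∑ v ∈ univ.filter (fun v => ¬ f v = 0), (if v ∈ S2 then 1 else 0) = S2.card := by
      rw [Finset.sum_ite_mem, Finset.inter_eq_right.mpr hsub, Finset.card_eq_sum_ones]
    have hw : (univ.filter (fun v => ¬ f v = 0)).card + S2.card ≤ ∑ v, f v := by
      calc (univ.filter (fun v => ¬ f v = 0)).card + S2.card
          = ∑ v ∈ univ.filter (fun v => ¬ f v = 0), (1 + if v ∈ S2 then 1 else 0) := by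
            rw [Finset.sum_add_distrib, Finset.sum_const, smul_eq_mul, Nat.mul_one, e1]
        _ ≤ ∑ v ∈ univ.filter (fun v => ¬ f v = 0), f v := Finset.sum_le_sum (fun v hv => by
            simp only [Finset.mem_filter, Finset.mem_univ, true_and] at hv
            by_cases hv2 : v ∈ S2
            · have hfv2 : f v = 2 := by
                rw [hS2, Finset.mem_filter] at hv2
                exact hv2.2.2
              rw [if_pos hv2, hfv2]
            · rw [if_neg hv2]
              omega)
        _ ≤ ∑ v, f v := Finset.sum_le_sum_of_subset (Finset.filter_subset _ _)
    omega
  have h5 : strongSupportCount G = S01.card + S2.card := by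
    have e1 : S01 = (univ.filter (fun v => 2 ≤ leafNbrCount G v)).filter (fun v => f v ≤ 1) := by
      rw [hS01, Finset.filter_filter]
    have e2 : S2 = (univ.filter (fun v => 2 ≤ leafNbrCount G v)).filter (fun v => ¬ f v ≤ 1) := by
      rw [hS2, Finset.filter_filter]
      refine Finset.filter_congr (fun v _ => ?_)
      have := hf2 v
      constructor
      · rintro ⟨hA, hB⟩; exact ⟨hA, by omega⟩
      · rintro ⟨hA, hB⟩; exact ⟨hA, by omega⟩
    rw [e1, e2]
    simp only [strongSupportCount]
    exact (Finset.card_filter_add_card_filter_not _).symm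
  have hmain : 2 * (Fintype.card V + strongSupportCount G) ≤ (r + 1) * gammaCI G := by
    rw [h5, ← hsum]
    have hfin : (∑ v, f v) * (r - 1) + 2 * (∑ v, f v) = (r + 1) * (∑ v, f v) := by
      have h : r - 1 + 2 = r + 1 := by omega
      calc (∑ v, f v) * (r - 1) + 2 * (∑ v, f v) = (∑ v, f v) * (r - 1 + 2) := by ring
        _ = (r + 1) * (∑ v, f v) := by rw [h]; ring
    generalize hTg : (∑ u, f u * (univ.filter (fun x => G.Adj u x ∧ f x = 0)).card) = T at h1 h2
    generalize hBg : (∑ v, f v) * (r - 1) = B at h2 hfin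
    generalize hCg : (r + 1) * (∑ v, f v) = C at hfin ⊢
    generalize hwg : (∑ v, f v) = w at h4 hfin
    omega
  rw [div_le_iff₀ (by positivity : (0:ℚ) < (r:ℚ) + 1),
    mul_comm ((gammaCI G : ℚ)) ((r:ℚ) + 1)]
  exact_mod_cast hmain
end
end

section
/- Let G be a graph of order n with maximum degree Δ and s' strong support vertices. Then γ_cI(G) ≥ 2(n + s')/(Δ + 2). -/
open Finset SimpleGraph
open scoped Classical

noncomputable section

section Aux

variable {V : Type*} [Fintype V]


def Sfun (G : SimpleGraph V) (f : V → ℕ) (v : V) : ℕ :=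
  2 * f v + (∑ u ∈ univ.filter (fun u => G.Adj v u), f u) + f v * (G.maxDegree - G.degree v)

lemma sum_nbr (G : SimpleGraph V) (f : V → ℕ) :
    ∑ v, ∑ u ∈ univ.filter (fun u => G.Adj v u), f u = ∑ u, f u * G.degree u := by
  simp_rw [Finset.sum_filter]
  rw [Finset.sum_comm]
  refine Finset.sum_congr rfl fun u _ => ?_
  rw [← Finset.sum_filter]
  have h : (univ.filter (fun v => G.Adj v u)) = G.neighborFinset u := by
    ext v; simp [adj_comm]
  rw [h, Finset.sum_const, ← SimpleGraph.card_neighborFinset_eq_degree]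
  ring_nf

lemma sum_Sfun (G : SimpleGraph V) (f : V → ℕ) :
    ∑ v, Sfun G f v = (G.maxDegree + 2) * ∑ v, f v := by
  unfold Sfun
  rw [Finset.sum_add_distrib, Finset.sum_add_distrib, sum_nbr]
  have h : ∀ v, f v * (G.maxDegree - G.degree v) + f v * G.degree v = f v * G.maxDegree := by
    intro v
    rw [← mul_add, Nat.sub_add_cancel (G.degree_le_maxDegree v)]
  calc ∑ v, 2 * f v + ∑ u, f u * G.degree u + ∑ v, f v * (G.maxDegree - G.degree v)
      = ∑ v, 2 * f v + ∑ v, (f v * (G.maxDegree - G.degree v) + f v * G.degree v) := by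
        rw [Finset.sum_add_distrib]; ring
    _ = ∑ v, 2 * f v + ∑ v, f v * G.maxDegree := by simp_rw [h]
    _ = (G.maxDegree + 2) * ∑ v, f v := by rw [← Finset.sum_mul, ← Finset.mul_sum]; ring

lemma two_le_Sfun (G : SimpleGraph V) (f : V → ℕ) (hf : IsCIDFun G f) (v : V) :
    2 ≤ Sfun G f v := by
  rcases Nat.eq_zero_or_pos (f v) with h | h
  · have h2 := hf.2.1 v h
    unfold Sfun
    exact le_trans h2 (by omega)
  · have : 2 ≤ 2 * f v := by omega
    exact le_trans this (le_trans (Nat.le_add_right _ _) (Nat.le_add_right _ _))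

-- leaf neighborhood
lemma leaf_filter (G : SimpleGraph V) {t u : V} (hadj : G.Adj t u) (hdeg : G.degree u = 1) :
    univ.filter (fun w => G.Adj u w) = {t} := by
  have h1 : univ.filter (fun w => G.Adj u w) = G.neighborFinset u := by
    ext w; simp
  rw [h1]
  have hc : (G.neighborFinset u).card = 1 := by rwa [card_neighborFinset_eq_degree]
  obtain ⟨a, ha⟩ := Finset.card_eq_one.mp hc
  have ht : t ∈ G.neighborFinset u := by simp [hadj.symm]
  rw [ha] at ht ⊢
  simp at ht
  rw [ht]

lemma strong_bound (G : SimpleGraph V) (f : V → ℕ) (hf : IsCIDFun G f) (t : V)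
    (ht : 2 ≤ (univ.filter (fun u => G.Adj t u ∧ G.degree u = 1)).card) :
    2 * (insert t (univ.filter (fun u => G.Adj t u ∧ G.degree u = 1))).card + 2
      ≤ ∑ u ∈ insert t (univ.filter (fun u => G.Adj t u ∧ G.degree u = 1)), Sfun G f u := by
  set L := univ.filter (fun u => G.Adj t u ∧ G.degree u = 1) with hL
  have htL : t ∉ L := by
    intro h; rw [hL, Finset.mem_filter] at h; exact G.irrefl h.2.1
  rw [Finset.card_insert_of_notMem htL, Finset.sum_insert htL]
  -- basic facts
  have hLsub : L ⊆ G.neighborFinset t := by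
    intro u hu; rw [hL, Finset.mem_filter] at hu; simp [hu.2.1]
  have hdegt : L.card ≤ G.degree t := by
    rw [← card_neighborFinset_eq_degree]; exact Finset.card_le_card hLsub
  have hΔ : L.card ≤ G.maxDegree := le_trans hdegt (G.degree_le_maxDegree t)
  have hNt : ∑ u ∈ L, f u ≤ ∑ u ∈ univ.filter (fun u => G.Adj t u), f u := by
    apply Finset.sum_le_sum_of_subset
    intro u hu; rw [hL, Finset.mem_filter] at hu; simp [hu.2.1]
  have hNu : ∀ u ∈ L, ∑ w ∈ univ.filter (fun w => G.Adj u w), f w = f t := by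
    intro u hu; rw [hL, Finset.mem_filter] at hu
    rw [leaf_filter G hu.2.1 hu.2.2, Finset.sum_singleton]
  rcases Nat.eq_zero_or_pos (f t) with hft | hft
  · -- f t = 0 : every leaf has f u ≥ 1, Sfun u ≥ 3, Sfun t ≥ 2
    have hfu : ∀ u ∈ L, 1 ≤ f u := by
      intro u hu
      by_contra h
      have h0 : f u = 0 := by omega
      have := hf.2.1 u h0
      rw [hNu u hu, hft] at this
      omega
    have hSu : ∀ u ∈ L, 3 ≤ Sfun G f u := by
      intro u hu
      have hu' := hu
      rw [hL, Finset.mem_filter] at hu'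
      unfold Sfun
      rw [hNu u hu, hu'.2.2, hft]
      have h1 := hfu u hu
      have h2 : 1 ≤ G.maxDegree - 1 := by omega
      calc 3 = 2 * 1 + 0 + 1 * 1 := by norm_num
        _ ≤ 2 * f u + 0 + f u * (G.maxDegree - 1) := by
            gcongr <;> omega

    have hSt : 2 ≤ Sfun G f t := two_le_Sfun G f hf t
    have hsum : 3 * L.card ≤ ∑ u ∈ L, Sfun G f u := by
      calc 3 * L.card = ∑ _u ∈ L, 3 := by rw [Finset.sum_const, smul_eq_mul]; ring
        _ ≤ ∑ u ∈ L, Sfun G f u := Finset.sum_le_sum hSu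
    omega
  · -- f t ≥ 1 : Sfun t ≥ 4 and every u ∈ L has Sfun u ≥ 2
    have hft2 := hf.1 t
    have hSu : ∀ u ∈ L, 2 ≤ Sfun G f u := fun u _ => two_le_Sfun G f hf u
    have hSt : 4 ≤ Sfun G f t := by
      rcases Nat.lt_or_ge (f t) 2 with h1 | h2
      · -- f t = 1 : each leaf has f u ≥ 1, so f(N(t)) ≥ L.card ≥ 2
        have hft1 : f t = 1 := by omega
        have hfu : ∀ u ∈ L, 1 ≤ f u := by
          intro u hu
          by_contra h
          have h0 : f u = 0 := by omega
          have := hf.2.1 u h0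
          rw [hNu u hu, hft1] at this
          omega
        have hLf : 2 ≤ ∑ u ∈ L, f u := by
          calc 2 ≤ L.card := ht
            _ = ∑ _u ∈ L, 1 := by simp
            _ ≤ ∑ u ∈ L, f u := Finset.sum_le_sum hfu
        unfold Sfun
        have : 2 ≤ ∑ u ∈ univ.filter (fun u => G.Adj t u), f u := le_trans hLf hNt
        omega
      · -- f t = 2
        unfold Sfun
        have : 4 ≤ 2 * f t := by omega
        omega
    have hsum : 2 * L.card ≤ ∑ u ∈ L, Sfun G f u := by
      calc 2 * L.card = ∑ _u ∈ L, 2 := by rw [Finset.sum_const, smul_eq_mul]; ring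
        _ ≤ ∑ u ∈ L, Sfun G f u := Finset.sum_le_sum hSu
    omega

lemma Aset_disjoint (G : SimpleGraph V) {s t : V}
    (hs : 2 ≤ leafNbrCount G s) (ht : 2 ≤ leafNbrCount G t) (hst : s ≠ t) :
    Disjoint (insert s (univ.filter (fun u => G.Adj s u ∧ G.degree u = 1)))
      (insert t (univ.filter (fun u => G.Adj t u ∧ G.degree u = 1))) := by
  have hdeg : ∀ v : V, 2 ≤ leafNbrCount G v → 2 ≤ G.degree v := by
    intro v hv
    refine le_trans hv ?_
    rw [← card_neighborFinset_eq_degree]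
    apply Finset.card_le_card
    intro u hu; rw [Finset.mem_filter] at hu; simp [hu.2.1]
  rw [Finset.disjoint_left]
  intro x hx hx'
  rw [Finset.mem_insert, Finset.mem_filter] at hx hx'
  rcases hx with rfl | ⟨_, hxs⟩
  · rcases hx' with rfl | ⟨_, hxt⟩
    · exact hst rfl
    · have := hdeg x hs; omega
  · rcases hx' with rfl | ⟨_, hxt⟩
    · have := hdeg x ht; omega
    · -- x is a leaf adjacent to both s and t
      have hc : (G.neighborFinset x).card = 1 := by
        rw [card_neighborFinset_eq_degree]; exact hxs.2
      have hsx : s ∈ G.neighborFinset x := by simp [hxs.1.symm]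
      have htx : t ∈ G.neighborFinset x := by simp [hxt.1.symm]
      exact hst (Finset.card_le_one.mp (le_of_eq hc) s hsx t htx)

lemma key_ineq (G : SimpleGraph V) (f : V → ℕ) (hf : IsCIDFun G f) :
    2 * Fintype.card V + 2 * (univ.filter (fun v => 2 ≤ leafNbrCount G v)).card
      ≤ (G.maxDegree + 2) * ∑ v, f v := by
  rw [← sum_Sfun]
  set T := univ.filter (fun v => 2 ≤ leafNbrCount G v) with hT
  set A : V → Finset V := fun t => insert t (univ.filter (fun u => G.Adj t u ∧ G.degree u = 1)) with hA
  have hdisj : ∀ s ∈ T, ∀ t ∈ T, s ≠ t → Disjoint (A s) (A t) := by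
    intro s hs t ht hst
    rw [hT, Finset.mem_filter] at hs ht
    exact Aset_disjoint G hs.2 ht.2 hst
  set U := T.biUnion A with hU
  have hUcard : U.card = ∑ t ∈ T, (A t).card := Finset.card_biUnion hdisj
  have hUuniv : U ⊆ univ := Finset.subset_univ U
  have hsplit : ∑ v ∈ univ \ U, Sfun G f v + ∑ v ∈ U, Sfun G f v = ∑ v, Sfun G f v :=
    Finset.sum_sdiff hUuniv
  have hUsum : ∑ t ∈ T, (2 * (A t).card + 2) ≤ ∑ v ∈ U, Sfun G f v := by
    rw [hU, Finset.sum_biUnion hdisj]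
    apply Finset.sum_le_sum
    intro t htT
    rw [hT, Finset.mem_filter] at htT
    exact strong_bound G f hf t htT.2
  have hrest : 2 * (univ \ U).card ≤ ∑ v ∈ univ \ U, Sfun G f v := by
    calc 2 * (univ \ U).card = ∑ _v ∈ univ \ U, 2 := by rw [Finset.sum_const, smul_eq_mul]; ring
      _ ≤ _ := Finset.sum_le_sum (fun v _ => two_le_Sfun G f hf v)
  have hTexp : ∑ t ∈ T, (2 * (A t).card + 2) = 2 * U.card + 2 * T.card := by
    rw [Finset.sum_add_distrib, Finset.sum_const, smul_eq_mul, hUcard, Finset.mul_sum]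
    ring
  have hsd : (univ \ U).card = Fintype.card V - U.card := by
    rw [Finset.card_sdiff_of_subset hUuniv, Finset.card_univ]
  have hUle : U.card ≤ Fintype.card V := by
    rw [← Finset.card_univ]; exact Finset.card_le_card hUuniv
  omega

lemma key_ineq' (G : SimpleGraph V) (f : V → ℕ) (hf : IsCIDFun G f) :
    2 * Fintype.card V + 2 * strongSupportCount G ≤ (G.maxDegree + 2) * ∑ v, f v :=
  key_ineq G f hf

end Aux

/-- For a graph of order `n` with maximum degree `Δ` and `s'` strong support vertices,
`γ_cI(G) ≥ 2(n + s')/(Δ + 2)`. -/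
theorem stmt5 {V : Type*} [Fintype V] (G : SimpleGraph V) :
    (2 * ((Fintype.card V : ℚ) + strongSupportCount G)) / (G.maxDegree + 2) ≤ gammaCI G := by
  have hne : {w | ∃ f : V → ℕ, IsCIDFun G f ∧ ∑ v, f v = w}.Nonempty := by
    refine ⟨∑ _v : V, 1, fun _ => 1, ⟨fun v => one_le_two, fun v h => by simp at h,
      fun u v _ h => by simp at h⟩, rfl⟩
  obtain ⟨f, hf, hw⟩ := Nat.sInf_mem hne
  have hkey := key_ineq' G f hf
  rw [hw] at hkey
  have hpos : (0:ℚ) < (G.maxDegree : ℚ) + 2 := by positivity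
  rw [div_le_iff₀ hpos]
  have hq : ((2 * Fintype.card V + 2 * strongSupportCount G : ℕ) : ℚ)
      ≤ (((G.maxDegree + 2) * gammaCI G : ℕ) : ℚ) := by exact_mod_cast hkey
  push_cast at hq
  linarith
end
end

section
/- For the complete bipartite graph K_{2,n} with n ≥ 1, the covering Italian domination number equals 2. -/
open Finset SimpleGraph
open scoped Classical

noncomputable section

/-- For the complete bipartite graph `K_{2,n}` with `n ≥ 1`, `γ_cI = 2`. -/
theorem stmt7 (n : ℕ) (hn : 1 ≤ n) :
    gammaCI (completeBipartiteGraph (Fin 2) (Fin n)) = 2 := by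
  have h2 : (2 : ℕ) ∈ {w | ∃ f : Sum (Fin 2) (Fin n) → ℕ,
      IsCIDFun (completeBipartiteGraph (Fin 2) (Fin n)) f ∧ ∑ v, f v = w} := by
    refine ⟨Sum.elim (fun _ => 1) (fun _ => 0), ⟨?_, ?_, ?_⟩, ?_⟩
    · rintro (a | b) <;> simp
    · rintro (a | b) h
      · simp at h
      · have hsub : ({Sum.inl 0, Sum.inl 1} : Finset (Sum (Fin 2) (Fin n))) ⊆
            univ.filter (fun u => (completeBipartiteGraph (Fin 2) (Fin n)).Adj (Sum.inr b) u) := by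
          intro x hx
          simp only [Finset.mem_insert, Finset.mem_singleton] at hx
          rcases hx with rfl | rfl <;> simp [completeBipartiteGraph]
        calc (2:ℕ) = ∑ u ∈ ({Sum.inl 0, Sum.inl 1} : Finset (Sum (Fin 2) (Fin n))),
              Sum.elim (fun _ => 1) (fun _ => 0) u := by
              rw [Finset.sum_pair (by simp)]; simp
          _ ≤ _ := Finset.sum_le_sum_of_subset hsub
    · rintro (a | b) (c | d) hadj hz
      · simp [completeBipartiteGraph] at hadj
      · simp at hz
      · simp at hz
      · simp [completeBipartiteGraph] at hadj
    · rw [Fintype.sum_sum_type]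
      simp
  refine le_antisymm (Nat.sInf_le h2) (le_csInf ⟨2, h2⟩ ?_)
  rintro w ⟨f, ⟨hb, hdom, hind⟩, rfl⟩
  by_contra hlt
  push_neg at hlt
  have hle1 : ∑ v, f v ≤ 1 := by omega
  by_cases hz : ∃ v, f v = 0
  · obtain ⟨v, hv⟩ := hz
    have := hdom v hv
    have hsub := Finset.sum_le_sum_of_subset
      (Finset.filter_subset (fun u => (completeBipartiteGraph (Fin 2) (Fin n)).Adj v u) univ)
      (f := f)
    omega
  · push_neg at hz
    have : Finset.univ.card • 1 ≤ ∑ v, f v :=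
      Finset.card_nsmul_le_sum _ _ _ (fun v _ => Nat.one_le_iff_ne_zero.mpr (hz v))
    rw [smul_eq_mul, mul_one, Finset.card_univ, Fintype.card_sum, Fintype.card_fin, Fintype.card_fin] at this
    omega
end
end

section
/- Let G be a connected graph. Then γ_cI(G) = 2 if and only if G is isomorphic to K_{1,n}, K_{2,n}, or K*_{2,n} (the graph obtained from K_{2,n} by joining the two vertices in the partite set of size 2) for some n ≥ 1. -/
open Finset SimpleGraph
open scoped Classical

noncomputable section

/-- `K*_{2,n}`: the complete bipartite graph `K_{2,n}` plus the edge between the two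
vertices of the 2-side. -/
def Kstar (n : ℕ) : SimpleGraph (Fin 2 ⊕ Fin n) where
  Adj x y := x ≠ y ∧ (x.isLeft ∨ y.isLeft)
  symm := ⟨fun x y h => ⟨h.1.symm, h.2.symm⟩⟩
  loopless := ⟨fun x h => h.1 rfl⟩

lemma cid_comap {V W : Type*} [Fintype V] [Fintype W] {G : SimpleGraph V}
    {H : SimpleGraph W} (e : G ≃g H) {g : W → ℕ} (hg : IsCIDFun H g) :
    IsCIDFun G (fun v => g (e v)) ∧ ∑ v, g (e v) = ∑ w, g w := by
  obtain ⟨h1, h2, h3⟩ := hg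
  refine ⟨⟨fun v => h1 (e v), ?_, ?_⟩, Equiv.sum_comp e.toEquiv g⟩
  · intro v hv
    have hs : ∑ u ∈ univ.filter (fun u => G.Adj v u), g (e u)
        = ∑ x ∈ univ.filter (fun x => H.Adj (e v) x), g x := by
      refine Finset.sum_equiv e.toEquiv ?_ ?_
      · intro i; simp [e.map_adj_iff]
      · intro i _; rfl
    rw [hs]; exact h2 (e v) hv
  · intro a b hab; exact h3 (e a) (e b) (e.map_adj_iff.mpr hab)

lemma gammaCI_set_nonempty {V : Type*} [Fintype V] (G : SimpleGraph V) :
    {w | ∃ f : V → ℕ, IsCIDFun G f ∧ ∑ v, f v = w}.Nonempty := by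
  refine ⟨_, fun _ => 2, ⟨fun v => le_refl 2, fun v h => by simp at h,
    fun u v _ h => by simp at h⟩, rfl⟩

lemma gammaCI_eq_two {V : Type*} [Fintype V] (G : SimpleGraph V)
    (hcard : 2 ≤ Fintype.card V)
    (h2 : ∃ f : V → ℕ, IsCIDFun G f ∧ ∑ v, f v = 2) : gammaCI G = 2 := by
  have h2S : (2 : ℕ) ∈ {w | ∃ f : V → ℕ, IsCIDFun G f ∧ ∑ v, f v = w} := h2
  have hlb : ∀ k ∈ {w | ∃ f : V → ℕ, IsCIDFun G f ∧ ∑ v, f v = w}, 2 ≤ k := by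
    rintro k ⟨f, ⟨hle, hdom, hind⟩, hs⟩
    by_contra hk
    push_neg at hk
    have hzero : ∃ v, f v = 0 := by
      by_contra hz
      push_neg at hz
      have : ∑ _v : V, 1 ≤ ∑ v, f v :=
        Finset.sum_le_sum (fun v _ => Nat.one_le_iff_ne_zero.mpr (hz v))
      simp [Finset.card_univ] at this
      omega
    obtain ⟨v, hv⟩ := hzero
    have h1 := hdom v hv
    have h2' : ∑ u ∈ univ.filter (fun u => G.Adj v u), f u ≤ ∑ u, f u :=
      Finset.sum_le_sum_of_subset (Finset.filter_subset _ _)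
    omega
  exact le_antisymm (Nat.sInf_le h2S) (hlb _ (Nat.sInf_mem ⟨2, h2S⟩))

lemma equiv_of_card {V : Type*} [Fintype V] (p : V → Prop) [DecidablePred p] {m n : ℕ}
    (hm : Fintype.card {x // p x} = m) (hn : Fintype.card {x // ¬ p x} = n) :
    ∃ e : V ≃ (Fin m ⊕ Fin n), ∀ x, (e x).isLeft = true ↔ p x := by
  refine ⟨(Equiv.sumCompl p).symm.trans
    (Equiv.sumCongr (Fintype.equivFinOfCardEq hm) (Fintype.equivFinOfCardEq hn)), ?_⟩
  intro x
  by_cases h : p x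
  · simp [Equiv.sumCompl_symm_apply_of_pos h, h]
  · simp [Equiv.sumCompl_symm_apply_of_neg h, h]

lemma isRight_iff' {m n : ℕ} (s : Fin m ⊕ Fin n) : s.isRight = true ↔ ¬ s.isLeft = true := by
  cases s <;> simp

lemma iso_bipartite {V : Type*} [Fintype V] {G : SimpleGraph V} (p : V → Prop)
    [DecidablePred p] {m n : ℕ}
    (hm : Fintype.card {x // p x} = m) (hn : Fintype.card {x // ¬ p x} = n)
    (hadj : ∀ a b, G.Adj a b ↔ ((p a ∧ ¬ p b) ∨ (¬ p a ∧ p b))) :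
    Nonempty (G ≃g completeBipartiteGraph (Fin m) (Fin n)) := by
  obtain ⟨e, he⟩ := equiv_of_card p hm hn
  refine ⟨⟨e, ?_⟩⟩
  intro a b
  show (_ ∧ _ ∨ _ ∧ _) ↔ _
  rw [hadj a b, isRight_iff', isRight_iff', he a, he b]

lemma iso_kstar {V : Type*} [Fintype V] {G : SimpleGraph V} (p : V → Prop)
    [DecidablePred p] {n : ℕ}
    (hm : Fintype.card {x // p x} = 2) (hn : Fintype.card {x // ¬ p x} = n)
    (hadj : ∀ a b, G.Adj a b ↔ (a ≠ b ∧ (p a ∨ p b))) :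
    Nonempty (G ≃g Kstar n) := by
  obtain ⟨e, he⟩ := equiv_of_card p hm hn
  refine ⟨⟨e, ?_⟩⟩
  intro a b
  show (_ ≠ _ ∧ _) ↔ _
  rw [hadj a b, he a, he b, ne_eq, EmbeddingLike.apply_eq_iff_eq, ← ne_eq]

lemma cid_star (n : ℕ) :
    ∃ f : (Fin 1 ⊕ Fin n) → ℕ,
      IsCIDFun (completeBipartiteGraph (Fin 1) (Fin n)) f ∧ ∑ v, f v = 2 := by
  refine ⟨Sum.elim (fun _ => 2) (fun _ => 0), ⟨?_, ?_, ?_⟩, ?_⟩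
  · rintro (i | j) <;> simp
  · rintro (i | j) hv
    · simp at hv
    · have hmem : (Sum.inl 0 : Fin 1 ⊕ Fin n) ∈
          univ.filter (fun u => (completeBipartiteGraph (Fin 1) (Fin n)).Adj (Sum.inr j) u) := by
        simp [completeBipartiteGraph]
      calc (2:ℕ) = Sum.elim (fun _ => 2) (fun _ => 0) (Sum.inl (0 : Fin 1)) := rfl
        _ ≤ _ := Finset.single_le_sum (fun i _ => Nat.zero_le _) hmem
  · rintro (i | j) (i' | j') hab ⟨h1, h2⟩ <;> simp_all [completeBipartiteGraph]
  · simp [Fintype.sum_sum_type]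

lemma two_le_pair_sum {V : Type*} [Fintype V] (f : V → ℕ) (a b : V) (hab : a ≠ b)
    (ha : f a = 1) (hb : f b = 1) (t : Finset V) (hat : a ∈ t) (hbt : b ∈ t) :
    2 ≤ ∑ u ∈ t, f u := by
  have hsub : ({a, b} : Finset V) ⊆ t := by
    intro x hx; rcases Finset.mem_insert.mp hx with rfl | hx
    · exact hat
    · rw [Finset.mem_singleton.mp hx]; exact hbt
  calc (2:ℕ) = ∑ u ∈ ({a, b} : Finset V), f u := by rw [Finset.sum_pair hab, ha, hb]
    _ ≤ _ := Finset.sum_le_sum_of_subset hsub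

lemma cid_k2n (n : ℕ) :
    ∃ f : (Fin 2 ⊕ Fin n) → ℕ,
      IsCIDFun (completeBipartiteGraph (Fin 2) (Fin n)) f ∧ ∑ v, f v = 2 := by
  refine ⟨Sum.elim (fun _ => 1) (fun _ => 0), ⟨?_, ?_, ?_⟩, ?_⟩
  · rintro (i | j) <;> simp
  · rintro (i | j) hv
    · simp at hv
    · refine two_le_pair_sum _ (Sum.inl 0) (Sum.inl 1) (by simp) rfl rfl _ ?_ ?_ <;>
        simp [completeBipartiteGraph]
  · rintro (i | j) (i' | j') hab ⟨h1, h2⟩ <;> simp_all [completeBipartiteGraph]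
  · simp [Fintype.sum_sum_type]

lemma cid_kstar (n : ℕ) :
    ∃ f : (Fin 2 ⊕ Fin n) → ℕ,
      IsCIDFun (Kstar n) f ∧ ∑ v, f v = 2 := by
  refine ⟨Sum.elim (fun _ => 1) (fun _ => 0), ⟨?_, ?_, ?_⟩, ?_⟩
  · rintro (i | j) <;> simp
  · rintro (i | j) hv
    · simp at hv
    · refine two_le_pair_sum _ (Sum.inl 0) (Sum.inl 1) (by simp) rfl rfl _ ?_ ?_ <;>
        simp [Kstar]
  · rintro (i | j) (i' | j') hab ⟨h1, h2⟩ <;> simp_all [Kstar]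
  · simp [Fintype.sum_sum_type]

/-- A connected graph `G` satisfies `γ_cI(G) = 2` iff `G` is isomorphic to `K_{1,n}`,
`K_{2,n}` or `K*_{2,n}` for some `n ≥ 1`. -/
theorem stmt9 {V : Type*} [Fintype V] (G : SimpleGraph V) (hc : G.Connected) :
    gammaCI G = 2 ↔ ∃ n : ℕ, 1 ≤ n ∧
      (Nonempty (G ≃g completeBipartiteGraph (Fin 1) (Fin n)) ∨
       Nonempty (G ≃g completeBipartiteGraph (Fin 2) (Fin n)) ∨
       Nonempty (G ≃g Kstar n)) := by
  constructor
  · intro h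
    have hne := gammaCI_set_nonempty G
    have hmem : (2:ℕ) ∈ {w | ∃ f : V → ℕ, IsCIDFun G f ∧ ∑ v, f v = w} := by
      rw [← h]; exact Nat.sInf_mem hne
    obtain ⟨f, ⟨hle, hdom, hind⟩, hsum⟩ := hmem
    have hex : ∃ v, f v ≠ 0 := by
      by_contra hz
      push_neg at hz
      rw [Finset.sum_eq_zero (fun v _ => hz v)] at hsum
      omega
    obtain ⟨v, hv⟩ := hex
    have hsplit : f v + ∑ u ∈ univ.erase v, f u = 2 := by
      rw [Finset.add_sum_erase _ f (mem_univ v)]; exact hsum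
    have hfv := hle v
    rcases (show f v = 1 ∨ f v = 2 by omega) with hcase | hcase
    · -- two vertices of weight one
      have herase1 : ∑ u ∈ univ.erase v, f u = 1 := by omega
      have hexw : ∃ w ∈ univ.erase v, f w ≠ 0 := by
        refine Finset.exists_ne_zero_of_sum_ne_zero ?_
        rw [herase1]; omega
      obtain ⟨w, hwmem, hw0⟩ := hexw
      have hw : w ≠ v := (Finset.mem_erase.mp hwmem).1
      have hw1 : f w = 1 := by
        have := Finset.single_le_sum (f := f) (fun i _ => Nat.zero_le _) hwmem
        omega
      have hz0 : ∀ x, x ≠ v → x ≠ w → f x = 0 := by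
        intro x hxv hxw
        have hdz : ∑ u ∈ (univ.erase v).erase w, f u = 0 := by
          have := Finset.add_sum_erase _ f hwmem
          omega
        exact Finset.sum_eq_zero_iff.mp hdz x (by simp [Finset.mem_erase, hxv, hxw])
      have hf0 : ∀ x, ¬ (x = v ∨ x = w) → f x = 0 := by
        intro x hx; push_neg at hx; exact hz0 x hx.1 hx.2
      have hzadj : ∀ z, ¬ (z = v ∨ z = w) → G.Adj z v ∧ G.Adj z w := by
        intro z hz
        have hd := hdom z (hf0 z hz)
        set t := univ.filter (fun u => G.Adj z u) with ht
        have hb : ∑ u ∈ t, f u ≤ (if v ∈ t then 1 else 0) + (if w ∈ t then 1 else 0) := by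
          calc ∑ u ∈ t, f u
              ≤ ∑ u ∈ t, ((if u = v then 1 else 0) + (if u = w then 1 else 0)) := by
                refine Finset.sum_le_sum ?_
                intro u _
                rcases eq_or_ne u v with rfl | huv
                · rw [if_pos rfl, hcase]; exact Nat.le_add_right 1 _
                · rcases eq_or_ne u w with rfl | huw
                  · rw [if_neg huv, if_pos rfl]; simp [hw1]
                  · rw [hz0 u huv huw]; exact Nat.zero_le _
            _ = _ := by
                rw [Finset.sum_add_distrib, Finset.sum_ite_eq' t v (fun _ => 1),
                  Finset.sum_ite_eq' t w (fun _ => 1)]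
        have hvt : v ∈ t := by
          by_contra hnt
          rw [if_neg hnt] at hb
          have : (if w ∈ t then 1 else 0) ≤ 1 := by split <;> omega
          omega
        have hwt : w ∈ t := by
          by_contra hnt
          rw [if_neg hnt] at hb
          have : (if v ∈ t then 1 else 0) ≤ 1 := by split <;> omega
          omega
        exact ⟨(Finset.mem_filter.mp hvt).2, (Finset.mem_filter.mp hwt).2⟩
      have hcardp : Fintype.card {x // x = v ∨ x = w} = 2 := by
        rw [Fintype.card_subtype]
        have hfil : univ.filter (fun x => x = v ∨ x = w) = {v, w} := by
          ext x; simp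
        rw [hfil, Finset.card_pair (Ne.symm hw)]
      by_cases hvw : G.Adj v w
      · by_cases hall : ∀ x, x = v ∨ x = w
        · -- K_{1,1}
          refine ⟨1, le_refl 1, Or.inl ?_⟩
          refine iso_bipartite (fun x => x = v) (by simp [Fintype.card_subtype, Finset.filter_eq']) ?_ ?_
          · refine Fintype.card_eq_one_iff.mpr ⟨⟨w, hw⟩, ?_⟩
            rintro ⟨y, hy⟩
            rcases hall y with rfl | rfl
            · exact absurd rfl hy
            · rfl
          · intro a b
            constructor
            · intro hab
              have hne := G.ne_of_adj hab
              rcases hall a with rfl | rfl <;> rcases hall b with rfl | rfl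
              · exact absurd rfl hne
              · exact Or.inl ⟨rfl, hw⟩
              · exact Or.inr ⟨hw, rfl⟩
              · exact absurd rfl hne
            · rintro (⟨rfl, hb⟩ | ⟨ha, rfl⟩)
              · have : b = w := (hall b).resolve_left hb
                subst this; exact hvw
              · have : a = w := (hall a).resolve_left ha
                subst this; exact hvw.symm
        · -- K*_{2,n}
          push_neg at hall
          obtain ⟨z0, hz0'⟩ := hall
          have hz0'' : ¬ (z0 = v ∨ z0 = w) := by tauto
          have hnon : Nonempty {x // ¬ (x = v ∨ x = w)} := ⟨⟨z0, hz0''⟩⟩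
          refine ⟨Fintype.card {x // ¬ (x = v ∨ x = w)}, Fintype.card_pos, Or.inr (Or.inr ?_)⟩
          refine iso_kstar (fun x => x = v ∨ x = w) hcardp rfl ?_
          intro a b
          constructor
          · intro hab
            refine ⟨G.ne_of_adj hab, ?_⟩
            by_contra hpp
            push_neg at hpp
            exact hind a b hab ⟨hf0 a (by tauto), hf0 b (by tauto)⟩
          · rintro ⟨hne, hp⟩
            by_cases hpa : a = v ∨ a = w <;> by_cases hpb : b = v ∨ b = w
            · rcases hpa with rfl | rfl <;> rcases hpb with rfl | rfl
              · exact absurd rfl hne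
              · exact hvw
              · exact hvw.symm
              · exact absurd rfl hne
            · rcases hpa with rfl | rfl
              · exact (hzadj b hpb).1.symm
              · exact (hzadj b hpb).2.symm
            · rcases hpb with rfl | rfl
              · exact (hzadj a hpa).1
              · exact (hzadj a hpa).2
            · exact absurd hp (by tauto)
      · -- K_{2,n}
        have hexz : ∃ x, ¬ (x = v ∨ x = w) := by
          by_contra hall
          push_neg at hall
          have hall' : ∀ x, x = v ∨ x = w := hall
          obtain ⟨q⟩ := hc.preconnected v w
          cases q with
          | nil => exact hw rfl
          | cons hadj q' =>
            rename_i x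
            rcases hall' x with rfl | rfl
            · exact G.irrefl hadj
            · exact hvw hadj
        obtain ⟨z0, hz0''⟩ := hexz
        have hnon : Nonempty {x // ¬ (x = v ∨ x = w)} := ⟨⟨z0, hz0''⟩⟩
        refine ⟨Fintype.card {x // ¬ (x = v ∨ x = w)}, Fintype.card_pos, Or.inr (Or.inl ?_)⟩
        refine iso_bipartite (fun x => x = v ∨ x = w) hcardp rfl ?_
        intro a b
        constructor
        · intro hab
          by_cases hpa : a = v ∨ a = w <;> by_cases hpb : b = v ∨ b = w
          · exfalso
            rcases hpa with rfl | rfl <;> rcases hpb with rfl | rfl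
            · exact G.irrefl hab
            · exact hvw hab
            · exact hvw hab.symm
            · exact G.irrefl hab
          · exact Or.inl ⟨hpa, hpb⟩
          · exact Or.inr ⟨hpa, hpb⟩
          · exact absurd ⟨hf0 a hpa, hf0 b hpb⟩ (hind a b hab)
        · rintro (⟨hpa, hpb⟩ | ⟨hpa, hpb⟩)
          · rcases hpa with rfl | rfl
            · exact (hzadj b hpb).1.symm
            · exact (hzadj b hpb).2.symm
          · rcases hpb with rfl | rfl
            · exact (hzadj a hpa).1
            · exact (hzadj a hpa).2
    · -- one vertex of weight two: star
      have hz0 : ∀ u, u ≠ v → f u = 0 := by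
        intro u hu
        have h0 : ∑ u ∈ univ.erase v, f u = 0 := by omega
        exact Finset.sum_eq_zero_iff.mp h0 u (by simp [Finset.mem_erase, hu])
      have hadjv : ∀ u, u ≠ v → G.Adj v u := by
        intro u hu
        by_contra hna
        have hd := hdom u (hz0 u hu)
        have hzf : ∑ x ∈ univ.filter (fun x => G.Adj u x), f x = 0 := by
          refine Finset.sum_eq_zero ?_
          intro x hx
          rcases eq_or_ne x v with rfl | hxv
          · exact absurd ((Finset.mem_filter.mp hx).2.symm) hna
          · exact hz0 x hxv
        omega
      have hexu : ∃ u, u ≠ v := by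
        by_contra hu
        push_neg at hu
        have hcard1 : Fintype.card V = 1 := Fintype.card_eq_one_iff.mpr ⟨v, hu⟩
        have hm1 : (1:ℕ) ∈ {w | ∃ f : V → ℕ, IsCIDFun G f ∧ ∑ v, f v = w} :=
          ⟨fun _ => 1, ⟨fun _ => by simp, fun x hx => by simp at hx,
            fun a b _ hh => by simp at hh⟩, by simp [Finset.card_univ, hcard1]⟩
        have hle1 : gammaCI G ≤ 1 := Nat.sInf_le hm1
        omega
      obtain ⟨u, hu⟩ := hexu
      have hnon : Nonempty {x // ¬ x = v} := ⟨⟨u, hu⟩⟩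
      refine ⟨Fintype.card {x // ¬ x = v}, Fintype.card_pos, Or.inl ?_⟩
      refine iso_bipartite (fun x => x = v) (by simp [Fintype.card_subtype, Finset.filter_eq']) rfl ?_
      intro a b
      constructor
      · intro hab
        by_cases ha : a = v <;> by_cases hb : b = v
        · exfalso; rw [ha, hb] at hab; exact G.irrefl hab
        · exact Or.inl ⟨ha, hb⟩
        · exact Or.inr ⟨ha, hb⟩
        · exact absurd ⟨hz0 a ha, hz0 b hb⟩ (hind a b hab)
      · rintro (⟨ha, hb⟩ | ⟨ha, hb⟩)
        · rw [ha]; exact hadjv b hb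
        · rw [hb]; exact (hadjv a ha).symm
  · rintro ⟨n, hn, he | he | he⟩ <;> obtain ⟨e⟩ := he
    · refine gammaCI_eq_two G ?_ ?_
      · have := Fintype.card_congr e.toEquiv
        simp [Fintype.card_sum] at this
        omega
      · obtain ⟨g, hg, hs⟩ := cid_star n
        obtain ⟨hf, hsum⟩ := cid_comap e hg
        exact ⟨_, hf, by rw [hsum, hs]⟩
    · refine gammaCI_eq_two G ?_ ?_
      · have := Fintype.card_congr e.toEquiv
        simp [Fintype.card_sum] at this
        omega
      · obtain ⟨g, hg, hs⟩ := cid_k2n n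
        obtain ⟨hf, hsum⟩ := cid_comap e hg
        exact ⟨_, hf, by rw [hsum, hs]⟩
    · refine gammaCI_eq_two G ?_ ?_
      · have := Fintype.card_congr e.toEquiv
        simp [Fintype.card_sum] at this
        omega
      · obtain ⟨g, hg, hs⟩ := cid_kstar n
        obtain ⟨hf, hsum⟩ := cid_comap e hg
        exact ⟨_, hf, by rw [hsum, hs]⟩
end
end

section
/- For any graph G of order n, γ_cI(G) = n if and only if the maximum degree of G is at most 1. -/
open Finset SimpleGraph
open scoped Classical

noncomputable section

/-- For a graph `G` of order `n`, `γ_cI(G) = n` iff the maximum degree of `G` is at most 1. -/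
theorem stmt10 {V : Type*} [Fintype V] (G : SimpleGraph V) :
    gammaCI G = Fintype.card V ↔ G.maxDegree ≤ 1 := by
  have hfilt : ∀ v : V, (univ.filter (fun u => G.Adj v u)).card = G.degree v := by
    intro v
    rw [← SimpleGraph.card_neighborFinset_eq_degree]
    congr 1
    ext u
    simp [SimpleGraph.mem_neighborFinset]
  have hones : IsCIDFun G (fun _ => 1) :=
    ⟨fun v => by norm_num, fun v h => by simp at h, fun u v _ h => by simp at h⟩
  have hmem : Fintype.card V ∈ {w | ∃ f : V → ℕ, IsCIDFun G f ∧ ∑ v, f v = w} :=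
    ⟨fun _ => 1, hones, by simp⟩
  constructor
  · intro h
    by_contra hd
    push_neg at hd
    obtain ⟨v, hv⟩ : ∃ v, 2 ≤ G.degree v := by
      by_contra hc
      push_neg at hc
      exact absurd (G.maxDegree_le_of_forall_degree_le 1 (fun v => by
        have := hc v; omega)) (by omega)
    obtain ⟨u, hu, w, hw, huw⟩ :
        ∃ u ∈ univ.filter (fun u => G.Adj v u), ∃ w ∈ univ.filter (fun u => G.Adj v u), u ≠ w := by
      apply Finset.one_lt_card.mp
      rw [hfilt]; omega
    simp only [Finset.mem_filter, Finset.mem_univ, true_and] at hu hw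
    set f : V → ℕ := fun x => if x = v then 0 else 1 with hf
    have hfz : ∀ x, f x = 0 → x = v := by
      intro x hx
      by_contra hxv
      simp [hf, hxv] at hx
    have hcid : IsCIDFun G f := by
      refine ⟨fun x => by by_cases hx : x = v <;> simp [hf, hx], ?_, ?_⟩
      · intro x hx
        have hxv := hfz x hx
        subst hxv
        calc (2 : ℕ) = ∑ t ∈ ({u, w} : Finset V), f t := by
              rw [Finset.sum_pair huw]
              have h1 : f u = 1 := by simp [hf, G.ne_of_adj hu |>.symm]
              have h2 : f w = 1 := by simp [hf, G.ne_of_adj hw |>.symm]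
              omega
          _ ≤ _ := Finset.sum_le_sum_of_subset (by
              intro t ht
              simp only [Finset.mem_insert, Finset.mem_singleton] at ht
              rcases ht with rfl | rfl <;> simp [hu, hw])
      · intro a b hab hab0
        rw [hfz a hab0.1, hfz b hab0.2] at hab
        exact G.irrefl hab
    have hsum : ∑ x, f x = Fintype.card V - 1 := by
      have hvm : v ∈ (univ : Finset V) := Finset.mem_univ v
      rw [← Finset.add_sum_erase _ f hvm]
      simp only [hf, if_pos rfl, zero_add]
      have h1 : ∑ x ∈ univ.erase v, f x = ∑ _x ∈ univ.erase v, 1 :=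
        Finset.sum_congr rfl (fun x hx => by simp [hf, (Finset.mem_erase.mp hx).1])
      rw [h1, Finset.sum_const, smul_eq_mul, mul_one, Finset.card_erase_of_mem hvm,
        Finset.card_univ]
    have hle : gammaCI G ≤ Fintype.card V - 1 :=
      Nat.sInf_le ⟨f, hcid, hsum⟩
    have hpos : 1 ≤ Fintype.card V := Fintype.card_pos_iff.mpr ⟨v⟩
    omega
  · intro h
    have hdeg : ∀ v, G.degree v ≤ 1 := fun v => (G.degree_le_maxDegree v).trans h
    refine le_antisymm (Nat.sInf_le hmem) (le_csInf ⟨_, hmem⟩ ?_)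
    rintro w ⟨f, ⟨hle2, hdom, hind⟩, rfl⟩
    classical
    set Z : Finset V := univ.filter (fun x => f x = 0) with hZ
    -- each zero vertex has a partner with value 2
    have key : ∀ v ∈ Z, ∃ u, G.Adj v u ∧ f u = 2 := by
      intro v hvZ
      simp only [hZ, Finset.mem_filter] at hvZ
      have h2 := hdom v hvZ.2
      set s := univ.filter (fun u => G.Adj v u) with hs
      have hcard : s.card ≤ 1 := by rw [hs, hfilt]; exact hdeg v
      have hne : s.Nonempty := by
        rcases Finset.eq_empty_or_nonempty s with he | hne
        · rw [he] at h2; simp at h2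
        · exact hne
      obtain ⟨u, hu⟩ := hne
      have hseq : s = {u} :=
        Finset.eq_singleton_iff_unique_mem.mpr ⟨hu, fun x hx => Finset.card_le_one.mp hcard x hx u hu⟩
      rw [hseq, Finset.sum_singleton] at h2
      have : G.Adj v u := by
        have := hu; rw [hs] at this; simpa using this
      exact ⟨u, this, le_antisymm (hle2 u) h2⟩
    set p : V → V := fun v => if hv : ∃ u, G.Adj v u ∧ f u = 2 then Classical.choose hv else v with hp
    have hpspec : ∀ v ∈ Z, G.Adj v (p v) ∧ f (p v) = 2 := by
      intro v hvZ
      have hex := key v hvZ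
      simp only [hp, dif_pos hex]
      exact Classical.choose_spec hex
    have hinj : Set.InjOn p Z := by
      intro a ha b hb hab
      have h1 := (hpspec a ha).1
      have h2 := (hpspec b hb).1
      rw [hab] at h1
      have hc : (G.neighborFinset (p b)).card ≤ 1 := by
        rw [SimpleGraph.card_neighborFinset_eq_degree]; exact hdeg _
      exact Finset.card_le_one.mp hc a (by rw [SimpleGraph.mem_neighborFinset]; exact h1.symm)
        b (by rw [SimpleGraph.mem_neighborFinset]; exact h2.symm)
    set T : Finset V := Z.image p with hT
    have hTcard : T.card = Z.card := Finset.card_image_of_injOn hinj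
    have hTsub : T ⊆ univ \ Z := by
      intro t ht
      rw [hT, Finset.mem_image] at ht
      obtain ⟨v, hvZ, rfl⟩ := ht
      have := (hpspec v hvZ).2
      simp only [Finset.mem_sdiff, Finset.mem_univ, true_and, hZ, Finset.mem_filter]
      omega
    have hsplit : ∑ x, f x = ∑ x ∈ univ \ Z, f x := by
      rw [← Finset.sum_sdiff (Finset.subset_univ Z)]
      have : ∑ x ∈ Z, f x = 0 := Finset.sum_eq_zero (fun x hx => by
        simp only [hZ, Finset.mem_filter] at hx; exact hx.2)
      omega
    have hsplit2 : ∑ x ∈ univ \ Z, f x = ∑ x ∈ (univ \ Z) \ T, f x + ∑ x ∈ T, f x :=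
      (Finset.sum_sdiff hTsub).symm
    have hTsum : ∑ x ∈ T, f x = 2 * T.card := by
      have h1 : ∑ x ∈ T, f x = ∑ _x ∈ T, 2 :=
        Finset.sum_congr rfl (fun x hx => by
          rw [hT, Finset.mem_image] at hx
          obtain ⟨v, hvZ, rfl⟩ := hx
          exact (hpspec v hvZ).2)
      rw [h1, Finset.sum_const, smul_eq_mul, mul_comm]
    have hrest : ((univ \ Z) \ T).card ≤ ∑ x ∈ (univ \ Z) \ T, f x := by
      calc ((univ \ Z) \ T).card = ∑ _x ∈ (univ \ Z) \ T, 1 := Finset.card_eq_sum_ones _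
        _ ≤ _ := Finset.sum_le_sum (fun x hx => by
            simp only [Finset.mem_sdiff, Finset.mem_univ, true_and, hZ, Finset.mem_filter] at hx
            omega)
    have hcards : ((univ \ Z) \ T).card = (univ \ Z).card - T.card :=
      Finset.card_sdiff_of_subset hTsub
    have hZcard : (univ \ Z).card = Fintype.card V - Z.card := by
      rw [Finset.card_sdiff_of_subset (Finset.subset_univ Z), Finset.card_univ]
    have hZle : Z.card ≤ Fintype.card V := Finset.card_le_card (Finset.subset_univ Z) |>.trans_eq Finset.card_univ
    have hTle : T.card ≤ (univ \ Z).card := Finset.card_le_card hTsub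
    omega
end
end

section
/- If γ_cI(G) = β(G), then γ_cI(G) = γ₂^{oi}(G), where γ₂^{oi}(G) is the 2-outer-independent domination number. -/
open Finset SimpleGraph
open scoped Classical

noncomputable section

/-- The 2-outer-independent domination number: the smallest size of a set `S` such that
every vertex outside `S` has at least two neighbors in `S` and `V ∖ S` is independent. -/
def gamma2oi {V : Type*} [Fintype V] (G : SimpleGraph V) : ℕ :=
  sInf {k | ∃ S : Finset V, (∀ v, v ∉ S → 2 ≤ (S.filter (fun u => G.Adj v u)).card) ∧
      (∀ u, u ∉ S → ∀ v, v ∉ S → ¬ G.Adj u v) ∧ S.card = k}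

/-- If `γ_cI(G) = β(G)`, then `γ_cI(G) = γ₂^{oi}(G)`. -/
theorem stmt12 {V : Type*} [Fintype V] (G : SimpleGraph V) (h : gammaCI G = vcNum G) :
    gammaCI G = gamma2oi G := by
  classical
  -- γ_cI ≤ γ₂^{oi}
  have h2oi_ne : {k | ∃ S : Finset V, (∀ v, v ∉ S → 2 ≤ (S.filter (fun u => G.Adj v u)).card) ∧
      (∀ u, u ∉ S → ∀ v, v ∉ S → ¬ G.Adj u v) ∧ S.card = k}.Nonempty :=
    ⟨(univ : Finset V).card, univ, by simp, by simp, rfl⟩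
  have hle : gammaCI G ≤ gamma2oi G := by
    obtain ⟨S, hdom, hind, hcard⟩ := Nat.sInf_mem h2oi_ne
    set f : V → ℕ := fun v => if v ∈ S then 1 else 0 with hf
    have hsumf : ∀ v, ∑ u ∈ univ.filter (fun u => G.Adj v u), f u
        = (S.filter (fun u => G.Adj v u)).card := by
      intro v
      simp only [hf]
      rw [Finset.sum_ite_mem]
      simp only [Finset.sum_const, smul_eq_mul, mul_one]
      congr 1
      ext u
      simp [and_comm]
    have hstep : gammaCI G ≤ S.card := by
      apply Nat.sInf_le
      refine ⟨f, ⟨fun v => by simp only [hf]; split <;> omega, fun v hv => ?_, fun u v huv hc => ?_⟩, ?_⟩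
      · have hvS : v ∉ S := by by_contra hvS; simp [hf, hvS] at hv
        rw [hsumf]; exact hdom v hvS
      · have hu : u ∉ S := by by_contra hu; simp [hf, hu] at hc
        have hv : v ∉ S := by by_contra hv; simp [hf, hv] at hc
        exact hind u hu v hv huv
      · simp [hf, Finset.sum_ite_mem, Finset.univ_inter]
    calc gammaCI G ≤ S.card := hstep
    _ = gamma2oi G := hcard
  -- γ₂^{oi} ≤ γ_cI
  have hCI_ne : {w | ∃ f : V → ℕ, IsCIDFun G f ∧ ∑ v, f v = w}.Nonempty :=
    ⟨∑ _v : V, 2, fun _ => 2, ⟨fun _ => le_refl _, fun v hv => by simp at hv, fun u v _ hc => by simp at hc⟩, rfl⟩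
  obtain ⟨f, ⟨hf2, hfdom, hfind⟩, hfsum⟩ := Nat.sInf_mem hCI_ne
  have hfw : ∑ v, f v = gammaCI G := hfsum
  clear hfsum
  set S : Finset V := univ.filter (fun v => f v ≠ 0) with hS
  have hmemS : ∀ v, v ∈ S ↔ f v ≠ 0 := by intro v; simp [hS]
  -- S is a vertex cover
  have hvc : vcNum G ≤ S.card := by
    apply Nat.sInf_le
    refine ⟨S, fun u v huv => ?_, rfl⟩
    have := hfind u v huv
    rw [hmemS, hmemS]; tauto
  have hcardle : S.card ≤ ∑ v, f v := by
    have e1 : S.card = ∑ v ∈ S, 1 := by simp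
    have e2 : ∑ v ∈ S, 1 ≤ ∑ v ∈ S, f v := by
      apply Finset.sum_le_sum
      intro v hv
      have := (hmemS v).mp hv
      omega
    have e3 : ∑ v ∈ S, f v ≤ ∑ v, f v :=
      Finset.sum_le_sum_of_subset (Finset.subset_univ S)
    omega
  have hkey : ∑ v, f v = S.card := by
    have h1 : gammaCI G ≤ S.card := h ▸ hvc
    have h2 : gammaCI G = ∑ v, f v := hfw.symm
    omega
  -- f = 1 on S
  have hfone : ∀ v ∈ S, f v = 1 := by
    have hsplit : ∑ v, f v = ∑ v ∈ S, f v := by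
      rw [← Finset.sum_add_sum_compl S f]
      have : ∑ v ∈ Sᶜ, f v = 0 := by
        apply Finset.sum_eq_zero
        intro v hv
        simp [hS] at hv
        exact hv
      omega
    have heq : ∑ v ∈ S, f v = ∑ v ∈ S, 1 := by
      rw [← hsplit, hkey]; simp
    intro v hv
    by_contra hne
    have hgt : 1 < f v := by
      have := (hmemS v).mp hv; omega
    have hlt : ∑ v ∈ S, 1 < ∑ v ∈ S, f v := by
      apply Finset.sum_lt_sum
      · intro u hu
        have := (hmemS u).mp hu
        omega
      · exact ⟨v, hv, hgt⟩
    omega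
  -- S is a 2OID set
  have h2oid : gamma2oi G ≤ S.card := by
    apply Nat.sInf_le
    refine ⟨S, fun v hv => ?_, fun u hu v hv huv => ?_, rfl⟩
    · have hv0 : f v = 0 := by
        by_contra h0; exact hv ((hmemS v).mpr h0)
      have := hfdom v hv0
      have hsum : ∑ u ∈ univ.filter (fun u => G.Adj v u), f u
          = (S.filter (fun u => G.Adj v u)).card := by
        rw [show (S.filter (fun u => G.Adj v u)) =
            (univ.filter (fun u => G.Adj v u)).filter (fun u => u ∈ S) by
          ext u; simp [hmemS, and_comm]]
        rw [Finset.card_filter]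
        apply Finset.sum_congr rfl
        intro u hu
        by_cases huS : u ∈ S
        · simp [huS, hfone u huS]
        · have : f u = 0 := by
            by_contra h0; exact huS ((hmemS u).mpr h0)
          simp [huS, this]
      omega
    · have hu0 : f u = 0 := by by_contra h0; exact hu ((hmemS u).mpr h0)
      have hv0 : f v = 0 := by by_contra h0; exact hv ((hmemS v).mpr h0)
      exact hfind u v huv ⟨hu0, hv0⟩
  have hback : gamma2oi G ≤ gammaCI G := by
    have h2 : gammaCI G = ∑ v, f v := hfw.symm
    omega
  omega
end
end

section
/- For any graph G, γ_cI(G) ≤ γ₂^{oi}(G). -/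
open Finset SimpleGraph
open scoped Classical

noncomputable section

/-- For any graph `G`, `γ_cI(G) ≤ γ₂^{oi}(G)`. -/
theorem stmt13 {V : Type*} [Fintype V] (G : SimpleGraph V) :
    gammaCI G ≤ gamma2oi G := by
  have hne : {k | ∃ S : Finset V, (∀ v, v ∉ S → 2 ≤ (S.filter (fun u => G.Adj v u)).card) ∧
      (∀ u, u ∉ S → ∀ v, v ∉ S → ¬ G.Adj u v) ∧ S.card = k}.Nonempty := by
    refine ⟨(univ : Finset V).card, univ, ?_, ?_, rfl⟩
    · intro v hv; exact absurd (mem_univ v) hv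
    · intro u hu; exact absurd (mem_univ u) hu
  obtain ⟨S, hdom, hind, hcard⟩ := Nat.sInf_mem hne
  apply Nat.sInf_le
  refine ⟨fun v => if v ∈ S then 1 else 0, ⟨?_, ?_, ?_⟩, ?_⟩
  · intro v; dsimp only; split <;> omega
  · intro v hv
    have hvS : v ∉ S := by by_contra h; simp [h] at hv
    have h2 := hdom v hvS
    calc (2 : ℕ) ≤ (S.filter (fun u => G.Adj v u)).card := h2
      _ = ∑ u ∈ S.filter (fun u => G.Adj v u), (if u ∈ S then 1 else 0) := by
          rw [Finset.card_eq_sum_ones]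
          apply Finset.sum_congr rfl
          intro u hu
          simp [ (Finset.mem_filter.mp hu).1 ]
      _ ≤ ∑ u ∈ univ.filter (fun u => G.Adj v u), (if u ∈ S then 1 else 0) := by
          apply Finset.sum_le_sum_of_subset
          intro u hu; simp only [mem_filter] at hu ⊢
          exact ⟨mem_univ u, hu.2⟩
  · intro u v huv ⟨hu, hv⟩
    have hu' : u ∉ S := by by_contra h; simp [h] at hu
    have hv' : v ∉ S := by by_contra h; simp [h] at hv
    exact hind u hu' v hv' huv
  · rw [Finset.sum_ite_mem, Finset.univ_inter, Finset.sum_const, smul_eq_mul, mul_one, hcard]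
    rfl
end
end

section
/- Let G be the claw-free graph obtained from a cycle v₁v₂⋯v_p v₁ (p ≥ 3) by adding p new vertices u₁,…,u_p with uᵢ adjacent to vᵢ and v_{i+1} (indices mod p). Then γ_cI(G) = p, that is, half the order of G. -/
open Finset SimpleGraph
open scoped Classical

noncomputable section

/-- The `p`-sun over a cycle: the cycle `v₁ ⋯ v_p` (left copy) together with vertices
`u₁, …, u_p` (right copy), where `uᵢ` is adjacent to `vᵢ` and `v_{i+1}`. -/
def sunGraph (p : ℕ) [NeZero p] : SimpleGraph (Fin p ⊕ Fin p) where
  Adj x y :=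
    match x, y with
    | Sum.inl i, Sum.inl j => i ≠ j ∧ (j = i + 1 ∨ i = j + 1)
    | Sum.inl i, Sum.inr j => i = j ∨ i = j + 1
    | Sum.inr j, Sum.inl i => i = j ∨ i = j + 1
    | Sum.inr _, Sum.inr _ => False
  symm := by
    constructor
    rintro (i | i) (j | j) h
    · exact ⟨h.1.symm, h.2.symm⟩
    · exact h
    · exact h
    · exact h
  loopless := by
    constructor
    rintro (i | i) h
    · exact h.1 rfl
    · exact h

lemma fin_ne_add_one {p : ℕ} [NeZero p] (hp : 3 ≤ p) (i : Fin p) : i ≠ i + 1 := by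
  intro h
  have h2 := congrArg Fin.val h
  have hlt := i.is_lt
  simp [Fin.add_def] at h2
  rcases Nat.lt_or_ge (i.val + 1) p with h' | h'
  · rw [Nat.mod_eq_of_lt h'] at h2; omega
  · have hp1 : i.val + 1 = p := by omega
    rw [hp1, Nat.mod_self] at h2; omega

lemma sun_nbr {p : ℕ} [NeZero p] (i : Fin p) :
    univ.filter (fun u => (sunGraph p).Adj (Sum.inr i) u) =
      ({Sum.inl i, Sum.inl (i + 1)} : Finset (Fin p ⊕ Fin p)) := by
  ext x
  rcases x with j | j <;> simp only [Finset.mem_filter, Finset.mem_univ, true_and] <;> simp [sunGraph]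

/-- The `p`-sun over a cycle (`p ≥ 3`) has CID number `p`, half its order. -/
theorem stmt15 (p : ℕ) [NeZero p] (hp : 3 ≤ p) : gammaCI (sunGraph p) = p := by
  have hne := fin_ne_add_one hp
  have hmem : (p : ℕ) ∈ {w | ∃ f : Fin p ⊕ Fin p → ℕ, IsCIDFun (sunGraph p) f ∧ ∑ v, f v = w} := by
    refine ⟨Sum.elim (fun _ => 1) (fun _ => 0), ⟨?_, ?_, ?_⟩, ?_⟩
    · rintro (i | i) <;> simp
    · rintro (i | i) h
      · simp at h
      · rw [sun_nbr i, Finset.sum_pair (by simpa using hne i)]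
        simp
    · rintro (i | i) (j | j) hadj ⟨h1, h2⟩ <;> simp_all [sunGraph]
    · simp [Fintype.sum_sum_type]
  refine le_antisymm (Nat.sInf_le hmem) (le_csInf ⟨p, hmem⟩ ?_)
  rintro w ⟨f, ⟨hle, hdom, hind⟩, rfl⟩
  have key : ∀ i : Fin p, 2 ≤ f (Sum.inr i) + (f (Sum.inl i) + f (Sum.inl (i + 1))) := by
    intro i
    rcases Nat.eq_zero_or_pos (f (Sum.inr i)) with h0 | h0
    · have := hdom (Sum.inr i) h0
      rw [sun_nbr i, Finset.sum_pair (by simpa using hne i)] at this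
      omega
    · rcases Nat.eq_zero_or_pos (f (Sum.inl i)) with h1 | h1
      · rcases Nat.eq_zero_or_pos (f (Sum.inl (i + 1))) with h2 | h2
        · exact absurd ⟨h1, h2⟩ (hind _ _ (show (sunGraph p).Adj (Sum.inl i) (Sum.inl (i+1)) from ⟨hne i, Or.inl rfl⟩))
        · omega
      · omega
  have hsum : 2 * p ≤ ∑ i : Fin p, (f (Sum.inr i) + (f (Sum.inl i) + f (Sum.inl (i + 1)))) := by
    calc (2 * p : ℕ) = ∑ _i : Fin p, 2 := by simp [mul_comm]
    _ ≤ _ := Finset.sum_le_sum (fun i _ => key i)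
  have hshift : ∑ i : Fin p, f (Sum.inl (i + 1)) = ∑ i : Fin p, f (Sum.inl i) :=
    Fintype.sum_equiv (Equiv.addRight 1) _ _ (fun i => rfl)
  rw [Finset.sum_add_distrib, Finset.sum_add_distrib, hshift] at hsum
  rw [Fintype.sum_sum_type]
  set A := ∑ i : Fin p, f (Sum.inl i)
  set B := ∑ i : Fin p, f (Sum.inr i)
  have hAB : A ≤ A + B := Nat.le_add_right _ _
  omega
end
end

section
/- Let f be a CID function of a graph G, and let A = V₀ ∩ N(V₂) be the set of vertices assigned 0 that have a neighbor assigned 2. If G is K_{1,r}-free, then |A| ≤ (r−1)|V₂| and 2|V₀∖A| ≤ (r−1)|V₁|, where Vᵢ = {v : f(v) = i}. -/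
open Finset SimpleGraph
open scoped Classical

noncomputable section

/-- For a CID function `f` of a `K_{1,r}`-free graph with `A = V₀ ∩ N(V₂)`, one has
`|A| ≤ (r−1)|V₂|` and `2|V₀∖A| ≤ (r−1)|V₁|`. -/
theorem stmt16 {V : Type*} [Fintype V] (G : SimpleGraph V) (r : ℕ) (hr : 2 ≤ r)
    (hfree : K1rFree G r) (f : V → ℕ) (hf : IsCIDFun G f) :
    (univ.filter (fun v => f v = 0 ∧ ∃ u, G.Adj v u ∧ f u = 2)).card ≤
        (r - 1) * (univ.filter (fun v => f v = 2)).card ∧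
      2 * ((univ.filter (fun v => f v = 0)) \
            (univ.filter (fun v => f v = 0 ∧ ∃ u, G.Adj v u ∧ f u = 2))).card ≤
        (r - 1) * (univ.filter (fun v => f v = 1)).card := by
  obtain ⟨hle2, hwt, hind⟩ := hf
  -- key: every vertex has at most r-1 neighbors in V₀
  have key : ∀ u : V, (univ.filter (fun v => G.Adj u v ∧ f v = 0)).card ≤ r - 1 := by
    intro u
    by_contra h
    push_neg at h
    have hr' : r ≤ (univ.filter (fun v => G.Adj u v ∧ f v = 0)).card := by omega
    obtain ⟨S, hS, hScard⟩ := Finset.exists_subset_card_eq hr'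
    exact hfree ⟨u, S, hScard, fun v hv => ((Finset.mem_filter.1 (hS hv)).2).1,
      fun a ha b hb hab => hind a b hab ⟨((Finset.mem_filter.1 (hS ha)).2).2,
        ((Finset.mem_filter.1 (hS hb)).2).2⟩⟩
  set A := univ.filter (fun v => f v = 0 ∧ ∃ u, G.Adj v u ∧ f u = 2) with hA
  set V1 := univ.filter (fun v => f v = 1) with hV1
  set V2 := univ.filter (fun v => f v = 2) with hV2
  have swap : ∀ (S T : Finset V),
      (∑ v ∈ S, (T.filter (fun u => G.Adj v u)).card)
        = ∑ u ∈ T, (S.filter (fun v => G.Adj u v)).card := by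
    intro S T
    simp only [Finset.card_filter]
    rw [Finset.sum_comm]
    exact Finset.sum_congr rfl fun u _ => Finset.sum_congr rfl fun v _ => by rw [G.adj_comm]
  have bound : ∀ (S : Finset V), (∀ v ∈ S, f v = 0) → ∀ u : V,
      (S.filter (fun v => G.Adj u v)).card ≤ r - 1 := by
    intro S hS u
    refine le_trans (Finset.card_le_card ?_) (key u)
    intro v hv
    rw [Finset.mem_filter] at hv ⊢
    exact ⟨Finset.mem_univ v, hv.2, hS v hv.1⟩
  constructor
  · -- each v ∈ A has ≥ 1 neighbor in V₂
    have h1 : A.card ≤ ∑ v ∈ A, (V2.filter (fun u => G.Adj v u)).card := by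
      calc A.card = ∑ _v ∈ A, 1 := by rw [Finset.card_eq_sum_ones]
        _ ≤ _ := by
          apply Finset.sum_le_sum
          intro v hv
          rw [hA, Finset.mem_filter] at hv
          obtain ⟨_, _, u, hadj, hu2⟩ := hv
          rw [Nat.one_le_iff_ne_zero, ← Nat.pos_iff_ne_zero, Finset.card_pos]
          exact ⟨u, Finset.mem_filter.2 ⟨Finset.mem_filter.2 ⟨Finset.mem_univ u, hu2⟩, hadj⟩⟩
    calc A.card ≤ ∑ v ∈ A, (V2.filter (fun u => G.Adj v u)).card := h1
      _ = ∑ u ∈ V2, (A.filter (fun v => G.Adj u v)).card := swap A V2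
      _ ≤ ∑ _u ∈ V2, (r - 1) := by
          apply Finset.sum_le_sum
          intro u _
          exact bound A (fun v hv => (Finset.mem_filter.1 hv).2.1) u
      _ = (r - 1) * V2.card := by rw [Finset.sum_const, smul_eq_mul, mul_comm]
  · set B := (univ.filter (fun v => f v = 0)) \ A with hB
    have h2 : 2 * B.card ≤ ∑ v ∈ B, (V1.filter (fun u => G.Adj v u)).card := by
      calc 2 * B.card = ∑ _v ∈ B, 2 := by rw [Finset.sum_const, smul_eq_mul, mul_comm]
        _ ≤ _ := by
          apply Finset.sum_le_sum
          intro v hv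
          rw [hB, Finset.mem_sdiff, Finset.mem_filter] at hv
          obtain ⟨⟨_, hv0⟩, hvA⟩ := hv
          have hnA : ∀ u, G.Adj v u → f u ≠ 2 := by
            intro u hadj hu2
            exact hvA (Finset.mem_filter.2 ⟨Finset.mem_univ v, hv0, u, hadj, hu2⟩)
          have := hwt v hv0
          calc 2 ≤ ∑ u ∈ univ.filter (fun u => G.Adj v u), f u := this
            _ ≤ ∑ u ∈ univ.filter (fun u => G.Adj v u), (if f u = 1 then 1 else 0) := by
                apply Finset.sum_le_sum
                intro u hu
                have hadj := (Finset.mem_filter.1 hu).2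
                have := hle2 u
                have := hnA u hadj
                interval_cases h : f u <;> simp_all
            _ = (V1.filter (fun u => G.Adj v u)).card := by
                rw [← Finset.card_filter, hV1, Finset.filter_filter, Finset.filter_filter]
                congr 1
                ext u
                simp only [Finset.mem_filter]
                tauto
    calc 2 * B.card ≤ ∑ v ∈ B, (V1.filter (fun u => G.Adj v u)).card := h2
      _ = ∑ u ∈ V1, (B.filter (fun v => G.Adj u v)).card := swap B V1
      _ ≤ ∑ _u ∈ V1, (r - 1) := by
          apply Finset.sum_le_sum
          intro u _
          exact bound B (fun v hv => (Finset.mem_filter.1 (Finset.mem_sdiff.1 hv).1).2) u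
      _ = (r - 1) * V1.card := by rw [Finset.sum_const, smul_eq_mul, mul_comm]
end
end

section
/- For a connected claw-free graph G of order n ≥ 4 with no strong support vertex, γ_cI(G) ≥ n/2. -/
open Finset SimpleGraph
open scoped Classical

noncomputable section

/-- A connected claw-free graph of order `n ≥ 4` with no strong support vertex satisfies
`γ_cI(G) ≥ n/2`. -/
theorem stmt17 {V : Type*} [Fintype V] (G : SimpleGraph V) (hc : G.Connected)
    (hn : 4 ≤ Fintype.card V) (hclaw : K1rFree G 3)
    (hss : ∀ v : V, leafNbrCount G v ≤ 1) :
    Fintype.card V ≤ 2 * gammaCI G := by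
  have hne : {w | ∃ f : V → ℕ, IsCIDFun G f ∧ ∑ v, f v = w}.Nonempty := by
    refine ⟨Fintype.card V, fun _ => 1, ⟨fun v => by norm_num,
      fun v h => by simp at h, fun u v _ h => by simp at h⟩, by simp⟩
  obtain ⟨f, hf, hw⟩ := Nat.sInf_mem hne
  rw [show gammaCI G = sInf {w | ∃ f : V → ℕ, IsCIDFun G f ∧ ∑ v, f v = w} from rfl, ← hw]
  set Z : Finset V := univ.filter (fun v => f v = 0) with hZ
  set P : Finset V := univ.filter (fun v => ¬ f v = 0) with hP
  have hsplit : Z.card + P.card = Fintype.card V := by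
    rw [hZ, hP, Finset.card_filter_add_card_filter_not]
    rfl
  -- positive vertices: card ≤ weight
  have hPle : P.card ≤ ∑ v, f v := by
    calc P.card = ∑ _v ∈ P, 1 := by simp
    _ ≤ ∑ v ∈ P, f v := Finset.sum_le_sum (fun v hv => by
        exact Nat.one_le_iff_ne_zero.mpr (Finset.mem_filter.mp hv).2)
    _ ≤ ∑ v, f v := Finset.sum_le_sum_of_subset (Finset.filter_subset _ _)
  -- each vertex has at most 2 zero neighbors
  have hc2 : ∀ u : V, (Z.filter (fun z => G.Adj z u)).card ≤ 2 := by
    intro u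
    by_contra h
    push_neg at h
    obtain ⟨S, hS, hScard⟩ := Finset.exists_subset_card_eq h
    apply hclaw
    refine ⟨u, S, hScard, fun z hz => ?_, fun z hz w hw hadj => ?_⟩
    · exact ((Finset.mem_filter.mp (hS hz)).2).symm
    · have hz0 : f z = 0 := (Finset.mem_filter.mp (Finset.mem_filter.mp (hS hz)).1).2
      have hw0 : f w = 0 := (Finset.mem_filter.mp (Finset.mem_filter.mp (hS hw)).1).2
      exact hf.2.2 z w hadj ⟨hz0, hw0⟩
  -- double counting: 2 * Z.card ≤ 2 * weight
  have hZle : 2 * Z.card ≤ 2 * ∑ v, f v := by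
    calc 2 * Z.card = ∑ _z ∈ Z, 2 := by simp [Nat.mul_comm]
    _ ≤ ∑ z ∈ Z, ∑ u ∈ univ.filter (fun u => G.Adj z u), f u :=
        Finset.sum_le_sum (fun z hz => hf.2.1 z (Finset.mem_filter.mp hz).2)
    _ = ∑ z ∈ Z, ∑ u : V, if G.Adj z u then f u else 0 := by
        simp [Finset.sum_filter]
    _ = ∑ u : V, ∑ z ∈ Z, if G.Adj z u then f u else 0 := Finset.sum_comm
    _ = ∑ u : V, (Z.filter (fun z => G.Adj z u)).card * f u := by
        refine Finset.sum_congr rfl (fun u _ => ?_)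
        rw [← Finset.sum_filter, Finset.sum_const, smul_eq_mul]
    _ ≤ ∑ u : V, 2 * f u :=
        Finset.sum_le_sum (fun u _ => Nat.mul_le_mul_right _ (hc2 u))
    _ = 2 * ∑ v, f v := by rw [Finset.mul_sum]
  have hZ' : Z.card ≤ ∑ v, f v := Nat.le_of_mul_le_mul_left hZle (by norm_num)
  calc Fintype.card V = Z.card + P.card := hsplit.symm
  _ ≤ (∑ v, f v) + ∑ v, f v := Nat.add_le_add hZ' hPle
  _ = 2 * ∑ v, f v := (two_mul _).symm
end
end

section
/- Let G be a connected graph of order n ≥ 3 such that every vertex of a minimum vertex cover Q is adjacent to at least two leaves. Then γ_cI(G) = 2β(G). -/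
open Finset SimpleGraph
open scoped Classical

noncomputable section

/-- If every vertex of a minimum vertex cover `Q` of a connected graph `G` of order `n ≥ 3`
is adjacent to at least two leaves, then `γ_cI(G) = 2β(G)`. -/
theorem stmt18 {V : Type*} [Fintype V] (G : SimpleGraph V) (hc : G.Connected)
    (hn : 3 ≤ Fintype.card V) (Q : Finset V)
    (hQ : ∀ u v, G.Adj u v → u ∈ Q ∨ v ∈ Q) (hQmin : Q.card = vcNum G)
    (hleaf : ∀ v ∈ Q, 2 ≤ leafNbrCount G v) :
    gammaCI G = 2 * vcNum G := by
  classical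
  set S : V → Finset V := fun v => insert v (univ.filter (fun u => G.Adj v u ∧ G.degree u = 1)) with hS
  -- every vertex of Q has degree ≥ 2
  have hdeg : ∀ v ∈ Q, 2 ≤ G.degree v := by
    intro v hv
    have h1 := hleaf v hv
    have h2 : leafNbrCount G v ≤ G.degree v := by
      rw [← card_neighborFinset_eq_degree, neighborFinset_eq_filter, leafNbrCount]
      apply card_le_card
      intro u hu
      simp only [mem_filter, mem_univ, true_and] at hu ⊢
      exact hu.1
    omega
  -- disjointness of the S v, v ∈ Q
  have hdisj : (↑Q : Set V).PairwiseDisjoint S := by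
    intro v hv w hw hvw
    simp only [Function.onFun, Finset.disjoint_left]
    intro x hxv hxw
    simp only [hS, mem_insert, mem_filter, mem_univ, true_and] at hxv hxw
    rcases hxv with rfl | ⟨hadj, hdeg1⟩
    · rcases hxw with rfl | ⟨hadj', hdeg1'⟩
      · exact hvw rfl
      · have := hdeg x hv; omega
    · rcases hxw with rfl | ⟨hadj', hdeg1'⟩
      · have := hdeg x hw; omega
      · have hsub : ({v, w} : Finset V) ⊆ G.neighborFinset x := by
          intro y hy
          simp only [mem_insert, mem_singleton] at hy
          rcases hy with rfl | rfl
          · rw [mem_neighborFinset]; exact hadj.symm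
          · rw [mem_neighborFinset]; exact hadj'.symm
        have h2 : 2 ≤ (G.neighborFinset x).card := by
          have := card_le_card hsub
          rwa [card_insert_of_notMem (by simp [hvw]), card_singleton] at this
        rw [card_neighborFinset_eq_degree, hdeg1] at h2
        omega
  -- lower bound: any CID function has weight ≥ 2|Q|
  have hlow : ∀ f : V → ℕ, IsCIDFun G f → 2 * Q.card ≤ ∑ v, f v := by
    rintro f ⟨hf1, hf2, hf3⟩
    have hper : ∀ v ∈ Q, 2 ≤ ∑ u ∈ S v, f u := by
      intro v hv
      have hvnot : v ∉ univ.filter (fun u => G.Adj v u ∧ G.degree u = 1) := by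
        simp [G.irrefl]
      have hsum : ∑ u ∈ S v, f u
          = f v + ∑ u ∈ univ.filter (fun u => G.Adj v u ∧ G.degree u = 1), f u := by
        rw [hS]; exact sum_insert hvnot
      by_cases h2 : f v = 2
      · rw [hsum, h2]; omega
      · have hfv1 : f v ≤ 1 := by have := hf1 v; omega
        have hone : ∀ u ∈ univ.filter (fun u => G.Adj v u ∧ G.degree u = 1), 1 ≤ f u := by
          intro u hu
          simp only [mem_filter, mem_univ, true_and] at hu
          by_contra h0
          have hu0 : f u = 0 := by omega
          rcases Nat.lt_or_ge (f v) 1 with hv0 | hv1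
          · exact hf3 v u hu.1 ⟨by omega, hu0⟩
          · have hfv : f v = 1 := by omega
            have hsum2 := hf2 u hu0
            have hnb : univ.filter (fun x => G.Adj u x) = {v} := by
              rw [← neighborFinset_eq_filter]
              have hcard : (G.neighborFinset u).card = 1 := by
                rw [card_neighborFinset_eq_degree]; exact hu.2
              obtain ⟨a, ha⟩ := card_eq_one.mp hcard
              have hvmem : v ∈ G.neighborFinset u := by
                rw [mem_neighborFinset]; exact hu.1.symm
              rw [ha] at hvmem ⊢
              simp only [mem_singleton] at hvmem
              rw [hvmem]
            rw [hnb, sum_singleton, hfv] at hsum2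
            omega
        have hcard2 : 2 ≤ (univ.filter (fun u => G.Adj v u ∧ G.degree u = 1)).card :=
          hleaf v hv
        calc 2 ≤ (univ.filter (fun u => G.Adj v u ∧ G.degree u = 1)).card := hcard2
          _ = ∑ u ∈ univ.filter (fun u => G.Adj v u ∧ G.degree u = 1), 1 := by
              rw [sum_const, smul_eq_mul, mul_one]
          _ ≤ ∑ u ∈ univ.filter (fun u => G.Adj v u ∧ G.degree u = 1), f u :=
              sum_le_sum hone
          _ ≤ ∑ u ∈ S v, f u := by rw [hsum]; omega
    calc 2 * Q.card = ∑ _v ∈ Q, 2 := by rw [sum_const, smul_eq_mul, mul_comm]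
      _ ≤ ∑ v ∈ Q, ∑ u ∈ S v, f u := sum_le_sum hper
      _ = ∑ u ∈ Q.biUnion S, f u := (sum_biUnion hdisj).symm
      _ ≤ ∑ v, f v := sum_le_sum_of_subset (subset_univ _)
  -- the witness function
  have hnbh : ∀ v : V, ∃ u, G.Adj v u := by
    intro v
    obtain ⟨w, hw⟩ := Fintype.exists_ne_of_one_lt_card (by omega) v
    obtain ⟨p⟩ := hc.preconnected v w
    cases p with
    | nil => exact absurd rfl hw
    | cons h _ => exact ⟨_, h⟩
  set f0 : V → ℕ := fun v => if v ∈ Q then 2 else 0 with hf0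
  have hf0cid : IsCIDFun G f0 := by
    refine ⟨fun v => by simp only [hf0]; split <;> omega, ?_, ?_⟩
    · intro v hv0
      have hvQ : v ∉ Q := by
        by_contra h; simp [hf0, h] at hv0
      obtain ⟨u, hu⟩ := hnbh v
      have huQ : u ∈ Q := (hQ v u hu).resolve_left hvQ
      have humem : u ∈ univ.filter (fun u => G.Adj v u) := by
        simp [hu]
      calc 2 = f0 u := by simp [hf0, huQ]
        _ ≤ ∑ u ∈ univ.filter (fun u => G.Adj v u), f0 u :=
          single_le_sum (fun i _ => Nat.zero_le _) humem
    · intro u v huv ⟨hu0, hv0⟩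
      have huQ : u ∉ Q := by by_contra h; simp [hf0, h] at hu0
      have hvQ : v ∉ Q := by by_contra h; simp [hf0, h] at hv0
      exact (hQ u v huv).elim huQ hvQ
  have hf0sum : ∑ v, f0 v = 2 * Q.card := by
    rw [hf0]
    rw [Finset.sum_ite_mem, univ_inter, sum_const, smul_eq_mul, mul_comm]
  have hmem : 2 * Q.card ∈ {w | ∃ f : V → ℕ, IsCIDFun G f ∧ ∑ v, f v = w} :=
    ⟨f0, hf0cid, hf0sum⟩
  have hub : gammaCI G ≤ 2 * Q.card := Nat.sInf_le hmem
  have hlb : 2 * Q.card ≤ gammaCI G := by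
    have hne : {w | ∃ f : V → ℕ, IsCIDFun G f ∧ ∑ v, f v = w}.Nonempty := ⟨_, hmem⟩
    obtain ⟨f, hf, hfsum⟩ := Nat.sInf_mem hne
    rw [gammaCI, ← hfsum]
    exact hlow f hf
  rw [← hQmin]
  omega
end
end

section
/- The even cycle C_{2k} (k ≥ 2) satisfies γ_cI(C_{2k}) = k, i.e., half its order. -/
open Finset SimpleGraph
open scoped Classical

noncomputable section

lemma aux_mod_succ (n x : ℕ) (hx : x < n) : (x + 1) % n = if x + 1 = n then 0 else x + 1 := by
  split
  · rw [‹x + 1 = n›, Nat.mod_self]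
  · exact Nat.mod_eq_of_lt (by omega)

lemma aux_mod_pred (n x : ℕ) (hn : 0 < n) (hx : x < n) :
    ((n - 1) + x) % n = if x = 0 then n - 1 else x - 1 := by
  split
  · subst ‹x = 0›
    simpa using Nat.mod_eq_of_lt (show n - 1 < n by omega)
  · have h : (n - 1) + x = n + (x - 1) := by omega
    rw [h, Nat.add_mod_left, Nat.mod_eq_of_lt (by omega)]

lemma aux_sum_range (n : ℕ) :
    (∑ i ∈ Finset.range n, (if i % 2 = 0 then 1 else 0)) = (n + 1) / 2 := by
  induction n with
  | zero => simp
  | succ n ih =>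
    rw [Finset.sum_range_succ, ih]
    by_cases h : n % 2 = 0
    · rw [if_pos h]; omega
    · rw [if_neg h]; omega

/-- Adjacent vertices of an even cycle have different parity. -/
lemma aux_adj_parity (k : ℕ) (hk : 2 ≤ k) (u v : Fin (2 * k))
    (h : (cycleGraph (2 * k)).Adj u v) : u.val % 2 ≠ v.val % 2 := by
  rw [cycleGraph_adj'] at h
  have h2 : (2 : ℕ) ∣ 2 * k := ⟨k, rfl⟩
  have hu := u.isLt
  have hv := v.isLt
  rcases h with h | h
  · rw [Fin.sub_def] at h
    simp only at h
    have h' : ((2 * k - v.val) + u.val) % 2 = 1 % 2 := by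
      rw [← Nat.mod_mod_of_dvd _ h2, h]
    omega
  · rw [Fin.sub_def] at h
    simp only at h
    have h' : ((2 * k - u.val) + v.val) % 2 = 1 % 2 := by
      rw [← Nat.mod_mod_of_dvd _ h2, h]
    omega

lemma aux_val_one (n : ℕ) [NeZero n] (h : 2 ≤ n) : (1 : Fin n).val = 1 := by
  rw [Fin.val_one']
  exact Nat.mod_eq_of_lt (by omega)

lemma aux_val_add_one (k : ℕ) [NeZero (2 * k)] (hk : 2 ≤ k) (v : Fin (2 * k)) :
    (v + 1).val = if v.val + 1 = 2 * k then 0 else v.val + 1 := by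
  rw [Fin.add_def]
  simp only [aux_val_one (2 * k) (by omega)]
  exact aux_mod_succ _ _ v.isLt

lemma aux_val_sub_one (k : ℕ) [NeZero (2 * k)] (hk : 2 ≤ k) (v : Fin (2 * k)) :
    (v - 1).val = if v.val = 0 then 2 * k - 1 else v.val - 1 := by
  rw [Fin.sub_def]
  simp only [aux_val_one (2 * k) (by omega)]
  exact aux_mod_pred _ _ (by omega) v.isLt

/-- The even cycle `C_{2k}` (`k ≥ 2`) satisfies `γ_cI(C_{2k}) = k`. -/
theorem stmt19 (k : ℕ) (hk : 2 ≤ k) : gammaCI (cycleGraph (2 * k)) = k := by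
  haveI : NeZero (2 * k) := ⟨by omega⟩
  set G := cycleGraph (2 * k) with hG
  -- the witness function: 1 on even positions, 0 on odd
  set f : Fin (2 * k) → ℕ := fun v => if v.val % 2 = 0 then 1 else 0 with hf
  have hadj : ∀ u v : Fin (2 * k), G.Adj u v → u.val % 2 ≠ v.val % 2 :=
    fun u v h => aux_adj_parity k hk u v h
  have hfCID : IsCIDFun G f := by
    refine ⟨fun v => by by_cases h : v.val % 2 = 0 <;> simp [hf, h], ?_, ?_⟩
    · intro v hv
      have hvodd : v.val % 2 = 1 := by
        by_contra h
        simp [hf, Nat.mod_two_ne_one.mp h] at hv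
      -- the two neighbors v-1 and v+1 both have value 1
      have hne : v - 1 ≠ v + 1 := by
        intro h
        have h' := congrArg Fin.val h
        rw [aux_val_sub_one k hk, aux_val_add_one k hk] at h'
        have := v.isLt
        split_ifs at h' <;> omega
      have hval1 : f (v - 1) = 1 := by
        have hpar : (v - 1).val % 2 = 0 := by
          rw [aux_val_sub_one k hk]
          have := v.isLt
          split_ifs <;> omega
        simp only [hf]
        rw [if_pos hpar]
      have hval2 : f (v + 1) = 1 := by
        have hpar : (v + 1).val % 2 = 0 := by
          rw [aux_val_add_one k hk]
          have := v.isLt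
          split_ifs <;> omega
        simp only [hf]
        rw [if_pos hpar]
      have key : 2 = ∑ u ∈ ({v - 1, v + 1} : Finset (Fin (2 * k))), f u := by
        rw [Finset.sum_pair hne, hval1, hval2]
      refine le_trans (le_of_eq key) (Finset.sum_le_sum_of_subset ?_)
      intro u hu
      simp only [Finset.mem_insert, Finset.mem_singleton] at hu
      simp only [Finset.mem_filter, Finset.mem_univ, true_and]
      rw [hG, cycleGraph_adj']
      rcases hu with rfl | rfl
      · left; simp only [sub_sub_cancel]; exact aux_val_one (2 * k) (by omega)
      · right; simp only [add_sub_cancel_left]; exact aux_val_one (2 * k) (by omega)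
    · intro u v huv ⟨hu, hv⟩
      have hu' : u.val % 2 = 1 := by
        by_contra h
        simp [hf, Nat.mod_two_ne_one.mp h] at hu
      have hv' : v.val % 2 = 1 := by
        by_contra h
        simp [hf, Nat.mod_two_ne_one.mp h] at hv
      exact hadj u v huv (by omega)
  have hsum : ∑ v, f v = k := by
    rw [hf, Fin.sum_univ_eq_sum_range (fun i => if i % 2 = 0 then 1 else 0) (2 * k),
      aux_sum_range]
    omega
  have hmem : k ∈ {w | ∃ f : Fin (2 * k) → ℕ, IsCIDFun G f ∧ ∑ v, f v = w} :=
    ⟨f, hfCID, hsum⟩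
  -- lower bound: any CID function has weight at least k
  have hlb : ∀ w ∈ {w | ∃ f : Fin (2 * k) → ℕ, IsCIDFun G f ∧ ∑ v, f v = w}, k ≤ w := by
    rintro w ⟨g, ⟨hg2, hgdom, hgind⟩, rfl⟩
    set C : Finset (Fin (2 * k)) := univ.filter (fun v => g v ≠ 0) with hC
    have hcover : ∀ u v : Fin (2 * k), G.Adj u v → u ∈ C ∨ v ∈ C := by
      intro u v huv
      have := hgind u v huv
      by_contra h
      push_neg at h
      simp only [hC, Finset.mem_filter, Finset.mem_univ, true_and, not_not] at h
      exact this ⟨h.1, h.2⟩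
    -- the matching edges (2i, 2i+1)
    have hlt1 : ∀ i : Fin k, 2 * i.val < 2 * k := fun i => by have := i.isLt; omega
    have hlt2 : ∀ i : Fin k, 2 * i.val + 1 < 2 * k := fun i => by have := i.isLt; omega
    set p : Fin k → Fin (2 * k) := fun i => ⟨2 * i.val, hlt1 i⟩ with hp
    set q : Fin k → Fin (2 * k) := fun i => ⟨2 * i.val + 1, hlt2 i⟩ with hq
    have hadjpq : ∀ i : Fin k, G.Adj (p i) (q i) := by
      intro i
      rw [hG, cycleGraph_adj']
      right
      rw [Fin.sub_def]
      simp only [hp, hq]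
      have heq : (2 * k - 2 * i.val) + (2 * i.val + 1) = 2 * k + 1 := by
        have := i.isLt; omega
      rw [heq, Nat.add_mod_left, Nat.mod_eq_of_lt (by omega)]
    set sel : Fin k → Fin (2 * k) := fun i => if p i ∈ C then p i else q i with hsel
    have hselC : ∀ i : Fin k, sel i ∈ C := by
      intro i
      simp only [hsel]
      split_ifs with h
      · exact h
      · rcases hcover _ _ (hadjpq i) with h' | h'
        · exact absurd h' h
        · exact h'
    have hselval : ∀ i : Fin k, (sel i).val / 2 = i.val := by
      intro i
      have hp' : (p i).val = 2 * i.val := rfl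
      have hq' : (q i).val = 2 * i.val + 1 := rfl
      simp only [hsel]
      split_ifs <;> simp only [hp', hq'] <;> omega
    have hcard : k ≤ C.card := by
      have h1 : (univ : Finset (Fin k)).card ≤ C.card := by
        apply Finset.card_le_card_of_injOn sel (fun i _ => hselC i)
        intro i _ j _ hij
        have h2 := hselval i
        rw [hij, hselval j] at h2
        exact Fin.ext h2.symm
      simpa using h1
    calc k ≤ C.card := hcard
      _ = ∑ v ∈ C, 1 := by rw [Finset.sum_const, smul_eq_mul, mul_one]
      _ ≤ ∑ v ∈ C, g v := Finset.sum_le_sum (fun v hv => by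
            simp only [hC, Finset.mem_filter] at hv; omega)
      _ ≤ ∑ v, g v := Finset.sum_le_sum_of_subset (Finset.subset_univ C)
  exact le_antisymm (Nat.sInf_le hmem) (le_csInf ⟨k, hmem⟩ hlb)
end
end
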